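/- arXiv:1906.00618 — 9 statements merged into one kernel-verified Lean document; each statement's English description precedes it below -/
import Mathlib

section
/- For any point X̃ in the n×n simplex (nonnegative entries summing to 1) with ‖X̃1 − r‖₁ + ‖X̃ᵀ1 − c‖₁ ≤ δ, where r, c ∈ Δⁿ, the matrix X̂ produced by the rounding procedure satisfies X̂1 = r, X̂ᵀ1 = c, X̂ ≥ 0 entrywise, and ‖X̃ − X̂‖₁ ≤ 2δ. -/
/-!
Row scaling and then column scaling only shrink entries, and produce a nonnegative matrix
whose marginals are dominated by `r` and `c`. The missing mass `E` is split into the row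
deficit `e_r` and the column deficit `e_c`, both of total `E`, so the rank-one term
`e_r e_cᵀ / E` restores both marginals. The mass removed by each scaling step is at most the
corresponding marginal error, so `E ≤ δ`; since entries only decreased before the
nonnegative rank-one term was added, `‖X̃ − X̂‖₁ ≤ E + E ≤ 2δ`.
-/

open Finset Function

lemma min_div_one_mul_self {a s : ℝ} (ha : 0 ≤ a) (hs : 0 ≤ s) :
    min (a / s) 1 * s = min a s := by
  rcases hs.eq_or_lt with h | h
  · simp [← h, min_eq_right ha]
  · rw [min_mul_of_nonneg _ _ h.le, div_mul_cancel₀ _ h.ne', one_mul]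

lemma sub_min_le_abs_sub {a s t : ℝ} (hst : s ≤ t) : s - min a s ≤ |t - a| := by
  rcases le_total a s with h | h
  · rw [min_eq_left h]
    exact (sub_le_sub_right hst a).trans (le_abs_self _)
  · rw [min_eq_right h, sub_self]
    exact abs_nonneg _

lemma mul_sum_div_sum_of_nonneg {ι : Type*} [Fintype ι] {f : ι → ℝ} (hf : ∀ i, 0 ≤ f i)
    (i : ι) : f i * (∑ k, f k) / ∑ k, f k = f i := by
  by_cases h : ∑ k, f k = 0
  · simp [(sum_eq_zero_iff_of_nonneg fun k _ => hf k).1 h i (mem_univ i)]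
  · field_simp

variable {ι κ : Type*}

section RowClip

variable [Fintype κ] {r : ι → ℝ} {X : ι → κ → ℝ}

noncomputable def rowClip (r : ι → ℝ) (X : ι → κ → ℝ) : ι → κ → ℝ :=
  fun i j => min (r i / ∑ j', X i j') 1 * X i j

lemma rowClip_nonneg (hr : ∀ i, 0 ≤ r i) (hX : ∀ i j, 0 ≤ X i j) (i : ι) (j : κ) :
    0 ≤ rowClip r X i j :=
  mul_nonneg (le_min (div_nonneg (hr i) (sum_nonneg fun j _ => hX i j)) zero_le_one) (hX i j)

lemma rowClip_le (hX : ∀ i j, 0 ≤ X i j) (i : ι) (j : κ) : rowClip r X i j ≤ X i j :=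
  mul_le_of_le_one_left (hX i j) (min_le_right _ _)

lemma sum_rowClip (hr : ∀ i, 0 ≤ r i) (hX : ∀ i j, 0 ≤ X i j) (i : ι) :
    ∑ j, rowClip r X i j = min (r i) (∑ j, X i j) := by
  simp only [rowClip]
  rw [← mul_sum, min_div_one_mul_self (hr i) (sum_nonneg fun j _ => hX i j)]

end RowClip

variable [Fintype ι] [Fintype κ] {r : ι → ℝ} {c : κ → ℝ} {X Y : ι → κ → ℝ}

/-- The matrix `X''` of the rounding procedure; `swap` is the transpose. -/
noncomputable def clipMarginals (r : ι → ℝ) (c : κ → ℝ) (X : ι → κ → ℝ) : ι → κ → ℝ :=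
  swap (rowClip c (swap (rowClip r X)))

lemma clipMarginals_nonneg (hr : ∀ i, 0 ≤ r i) (hc : ∀ j, 0 ≤ c j) (hX : ∀ i j, 0 ≤ X i j)
    (i : ι) (j : κ) : 0 ≤ clipMarginals r c X i j :=
  rowClip_nonneg hc (fun j i => rowClip_nonneg hr hX i j) j i

lemma clipMarginals_le (hr : ∀ i, 0 ≤ r i) (hX : ∀ i j, 0 ≤ X i j) (i : ι) (j : κ) :
    clipMarginals r c X i j ≤ X i j :=
  (rowClip_le (fun j i => rowClip_nonneg hr hX i j) j i).trans (rowClip_le hX i j)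

lemma sum_clipMarginals_row_le (hr : ∀ i, 0 ≤ r i) (hX : ∀ i j, 0 ≤ X i j) (i : ι) :
    ∑ j, clipMarginals r c X i j ≤ r i :=
  calc ∑ j, clipMarginals r c X i j ≤ ∑ j, rowClip r X i j :=
        sum_le_sum fun j _ => rowClip_le (fun j i => rowClip_nonneg hr hX i j) j i
    _ = min (r i) (∑ j, X i j) := sum_rowClip hr hX i
    _ ≤ r i := min_le_left _ _

lemma sum_clipMarginals_col_le (hr : ∀ i, 0 ≤ r i) (hc : ∀ j, 0 ≤ c j)
    (hX : ∀ i j, 0 ≤ X i j) (j : κ) : ∑ i, clipMarginals r c X i j ≤ c j :=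
  (sum_rowClip hc (fun j i => rowClip_nonneg hr hX i j) j).trans_le (min_le_left _ _)

lemma sum_sub_sum_clipMarginals_le (hr : ∀ i, 0 ≤ r i) (hc : ∀ j, 0 ≤ c j)
    (hX : ∀ i j, 0 ≤ X i j) :
    ∑ i, ∑ j, X i j - ∑ i, ∑ j, clipMarginals r c X i j ≤
      ∑ i, |∑ j, X i j - r i| + ∑ j, |∑ i, X i j - c j| := by
  set X' := rowClip r X
  have hrow : ∑ i, (∑ j, X i j - min (r i) (∑ j, X i j)) ≤ ∑ i, |∑ j, X i j - r i| :=
    sum_le_sum fun i _ => sub_min_le_abs_sub le_rfl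
  have hcol : ∑ j, (∑ i, X' i j - min (c j) (∑ i, X' i j)) ≤ ∑ j, |∑ i, X i j - c j| :=
    sum_le_sum fun j _ => sub_min_le_abs_sub (sum_le_sum fun i _ => rowClip_le hX i j)
  have hX' : ∑ i, ∑ j, X' i j = ∑ i, min (r i) (∑ j, X i j) :=
    sum_congr rfl fun i _ => sum_rowClip hr hX i
  have hX'' : ∑ i, ∑ j, clipMarginals r c X i j = ∑ j, min (c j) (∑ i, X' i j) := by
    rw [sum_comm]
    exact sum_congr rfl fun j _ => sum_rowClip hc (fun j i => rowClip_nonneg hr hX i j) j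
  have hcomm : ∑ j, ∑ i, X' i j = ∑ i, ∑ j, X' i j := sum_comm
  rw [sum_sub_distrib] at hrow hcol
  linarith

def rowDeficit (r : ι → ℝ) (Y : ι → κ → ℝ) (i : ι) : ℝ :=
  r i - ∑ j, Y i j

/-- `Y + e_r e_cᵀ / E`, where `e_r`, `e_c` are the row and column deficits and `E = ∑ e_r`. -/
noncomputable def deficitFill (r : ι → ℝ) (c : κ → ℝ) (Y : ι → κ → ℝ) : ι → κ → ℝ :=
  fun i j => Y i j + rowDeficit r Y i * rowDeficit c (swap Y) j / ∑ i', rowDeficit r Y i'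

lemma sum_rowDeficit : ∑ i, rowDeficit r Y i = ∑ i, r i - ∑ i, ∑ j, Y i j :=
  sum_sub_distrib _ _

lemma sum_rowDeficit_swap (hrc : ∑ i, r i = ∑ j, c j) :
    ∑ j, rowDeficit c (swap Y) j = ∑ i, rowDeficit r Y i := by
  rw [sum_rowDeficit, sum_rowDeficit, hrc, sum_comm]

lemma swap_deficitFill (hrc : ∑ i, r i = ∑ j, c j) :
    swap (deficitFill r c Y) = deficitFill c r (swap Y) := by
  funext j i
  simp only [swap, deficitFill, sum_rowDeficit_swap hrc]
  ring

lemma deficit_mul_div_nonneg (hrY : ∀ i, ∑ j, Y i j ≤ r i) (hcY : ∀ j, ∑ i, Y i j ≤ c j)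
    (i : ι) (j : κ) :
    0 ≤ rowDeficit r Y i * rowDeficit c (swap Y) j / ∑ i', rowDeficit r Y i' :=
  div_nonneg (mul_nonneg (sub_nonneg.2 (hrY i)) (sub_nonneg.2 (hcY j)))
    (sum_nonneg fun i _ => sub_nonneg.2 (hrY i))

lemma deficitFill_nonneg (hY : ∀ i j, 0 ≤ Y i j) (hrY : ∀ i, ∑ j, Y i j ≤ r i)
    (hcY : ∀ j, ∑ i, Y i j ≤ c j) (i : ι) (j : κ) : 0 ≤ deficitFill r c Y i j :=
  add_nonneg (hY i j) (deficit_mul_div_nonneg hrY hcY i j)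

lemma sum_deficitFill_row (hrY : ∀ i, ∑ j, Y i j ≤ r i) (hrc : ∑ i, r i = ∑ j, c j)
    (i : ι) : ∑ j, deficitFill r c Y i j = r i := by
  simp only [deficitFill]
  rw [sum_add_distrib, ← sum_div, ← mul_sum, sum_rowDeficit_swap hrc,
    mul_sum_div_sum_of_nonneg (f := rowDeficit r Y) (fun i => sub_nonneg.2 (hrY i)), rowDeficit]
  ring

lemma sum_deficitFill_col (hcY : ∀ j, ∑ i, Y i j ≤ c j) (hrc : ∑ i, r i = ∑ j, c j)
    (j : κ) : ∑ i, deficitFill r c Y i j = c j := by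
  rw [← sum_deficitFill_row (r := c) (c := r) hcY hrc.symm j, ← swap_deficitFill hrc]

lemma sum_abs_sub_deficitFill_le (hYX : ∀ i j, Y i j ≤ X i j)
    (hrY : ∀ i, ∑ j, Y i j ≤ r i) (hcY : ∀ j, ∑ i, Y i j ≤ c j) (hrc : ∑ i, r i = ∑ j, c j) :
    ∑ i, ∑ j, |X i j - deficitFill r c Y i j| ≤
      ∑ i, ∑ j, X i j - ∑ i, ∑ j, Y i j + ∑ i, rowDeficit r Y i := by
  set E := ∑ i, rowDeficit r Y i
  have hrank : ∑ i, ∑ j, rowDeficit r Y i * rowDeficit c (swap Y) j / E = E := by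
    simp only [← sum_div, ← sum_mul_sum]
    rw [sum_rowDeficit_swap hrc, mul_self_div_self]
  calc ∑ i, ∑ j, |X i j - deficitFill r c Y i j|
      ≤ ∑ i, ∑ j, (X i j - Y i j + rowDeficit r Y i * rowDeficit c (swap Y) j / E) := by
        gcongr with i _ j _
        have ht := deficit_mul_div_nonneg hrY hcY i j
        rw [deficitFill, abs_sub_le_iff]
        constructor <;> linarith [hYX i j]
    _ = ∑ i, ∑ j, X i j - ∑ i, ∑ j, Y i j + E := by
        simp only [sum_add_distrib, sum_sub_distrib, hrank]

/-- Rounding guarantee (Lemma 7 of Altschuler–Weed–Rigollet): if `X̃` lies in the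
`n × n` simplex and its row/column marginals are within total `ℓ1` distance `δ`
of `r, c ∈ Δⁿ`, then the matrix `X̂` produced by the rounding procedure satisfies
`X̂1 = r`, `X̂ᵀ1 = c`, `X̂ ≥ 0`, and `‖X̃ − X̂‖₁ ≤ 2δ`. -/
theorem stmt_1 (n : ℕ) (δ : ℝ)
    (Xt : Fin n → Fin n → ℝ) (r c : Fin n → ℝ)
    (hXtnn : ∀ i j, 0 ≤ Xt i j) (hXtsum : ∑ i, ∑ j, Xt i j = 1)
    (hrnn : ∀ i, 0 ≤ r i) (hrsum : ∑ i, r i = 1)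
    (hcnn : ∀ j, 0 ≤ c j) (hcsum : ∑ j, c j = 1)
    (hclose : (∑ i, |(∑ j, Xt i j) - r i|) + (∑ j, |(∑ i, Xt i j) - c j|) ≤ δ)
    (X' : Fin n → Fin n → ℝ)
    (hX' : ∀ i j, X' i j = min (r i / ∑ j', Xt i j') 1 * Xt i j)
    (X'' : Fin n → Fin n → ℝ)
    (hX'' : ∀ i j, X'' i j = X' i j * min (c j / ∑ i', X' i' j) 1)
    (er ec : Fin n → ℝ) (E : ℝ)
    (her : ∀ i, er i = r i - ∑ j, X'' i j)
    (hec : ∀ j, ec j = c j - ∑ i, X'' i j)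
    (hE : E = ∑ i, er i)
    (Xh : Fin n → Fin n → ℝ)
    (hXh : ∀ i j, Xh i j = X'' i j + er i * ec j / E) :
    (∀ i, ∑ j, Xh i j = r i) ∧ (∀ j, ∑ i, Xh i j = c j) ∧
    (∀ i j, 0 ≤ Xh i j) ∧ (∑ i, ∑ j, |Xt i j - Xh i j|) ≤ 2 * δ := by
  obtain rfl : X' = rowClip r Xt := funext fun i => funext (hX' i)
  obtain rfl : X'' = clipMarginals r c Xt := funext fun i => funext fun j => by
    rw [hX'' i j, mul_comm]; rfl
  obtain rfl : er = rowDeficit r (clipMarginals r c Xt) := funext her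
  obtain rfl : ec = rowDeficit c (swap (clipMarginals r c Xt)) := funext hec
  obtain rfl : Xh = deficitFill r c (clipMarginals r c Xt) := funext fun i => funext fun j => by
    rw [hXh i j, hE]; rfl
  set Y := clipMarginals r c Xt
  have hrY := sum_clipMarginals_row_le (c := c) hrnn hXtnn
  have hcY := sum_clipMarginals_col_le hrnn hcnn hXtnn
  have hrc : ∑ i, r i = ∑ j, c j := hrsum.trans hcsum.symm
  have hdeficit : ∑ i, rowDeficit r Y i = ∑ i, ∑ j, Xt i j - ∑ i, ∑ j, Y i j := by
    rw [sum_rowDeficit, hrsum, hXtsum]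
  refine ⟨sum_deficitFill_row hrY hrc, sum_deficitFill_col hcY hrc,
    deficitFill_nonneg (clipMarginals_nonneg hrnn hcnn hXtnn) hrY hcY, ?_⟩
  calc ∑ i, ∑ j, |Xt i j - deficitFill r c Y i j|
      ≤ ∑ i, ∑ j, Xt i j - ∑ i, ∑ j, Y i j + ∑ i, rowDeficit r Y i :=
        sum_abs_sub_deficitFill_le (clipMarginals_le hrnn hXtnn) hrY hcY hrc
    _ = 2 * (∑ i, ∑ j, Xt i j - ∑ i, ∑ j, Y i j) := by rw [hdeficit]; ring
    _ ≤ 2 * δ := by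
        gcongr
        exact (sum_sub_sum_clipMarginals_le hrnn hcnn hXtnn).trans hclose
end

section
/- The value of the penalized problem min_{x ∈ Δᵐ} dᵀx + 2‖d‖_∞ ‖Ax − b‖₁ equals OPT = min_{x ∈ Δᵐ, Ax=b} dᵀx, given the existence of a rounding map that takes any x̃ ∈ Δᵐ with ‖Ax̃ − b‖₁ = δ to some x̂ ∈ Δᵐ with Ax̂ = b and ‖x̃ − x̂‖₁ ≤ 2δ. -/
/-!
Exact penalty: a feasible point beats the penalized value of any point of the simplex.
Rounding `x` to a feasible `x'` moves it by at most `2‖Ax − b‖₁` in `ℓ1`, and since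
`|dₑ| ≤ M` this changes the cost by at most `M ‖x − x'‖₁ ≤ 2M ‖Ax − b‖₁`, which is exactly
the penalty. Conversely, the penalty vanishes on feasible points.
-/

open Finset

theorem sInf_add_penalty_eq {α : Type*} {S : Set α} {feas : α → Prop} {f p : α → ℝ}
    (hp : ∀ x ∈ S, feas x → p x = 0)
    (hbdd : BddBelow {v | ∃ x ∈ S, feas x ∧ v = f x}) (hne : ∃ x ∈ S, feas x)
    (hround : ∀ x ∈ S, ∃ x' ∈ S, feas x' ∧ f x' ≤ f x + p x) :
    sInf {v | ∃ x ∈ S, v = f x + p x} = sInf {v | ∃ x ∈ S, feas x ∧ v = f x} := by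
  obtain ⟨x₀, hx₀S, hx₀⟩ := hne
  obtain ⟨a, ha⟩ := hbdd
  have hround_ge : ∀ x ∈ S, a ≤ f x + p x := by
    intro x hx
    obtain ⟨x', hx'S, hx', hle⟩ := hround x hx
    exact (ha ⟨x', hx'S, hx', rfl⟩).trans hle
  apply le_antisymm
  · refine csInf_le_csInf ⟨a, ?_⟩ ⟨_, x₀, hx₀S, hx₀, rfl⟩ ?_
    · rintro _ ⟨x, hx, rfl⟩
      exact hround_ge x hx
    · rintro _ ⟨x, hx, hfx, rfl⟩
      exact ⟨x, hx, by rw [hp x hx hfx, add_zero]⟩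
  · refine le_csInf ⟨_, x₀, hx₀S, rfl⟩ ?_
    rintro _ ⟨x, hx, rfl⟩
    obtain ⟨x', hx'S, hx', hle⟩ := hround x hx
    exact (csInf_le ⟨a, ha⟩ ⟨x', hx'S, hx', rfl⟩).trans hle

theorem sum_mul_le_sum_mul_add_mul_sum_abs_sub {ι : Type*} [Fintype ι] {d x y : ι → ℝ}
    {M : ℝ} (hM : ∀ i, |d i| ≤ M) :
    ∑ i, d i * y i ≤ ∑ i, d i * x i + M * ∑ i, |x i - y i| := by
  rw [mul_sum, ← sum_add_distrib]
  gcongr with i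
  calc d i * y i = d i * x i + d i * (y i - x i) := by ring
    _ ≤ d i * x i + |d i| * |x i - y i| := by
      rw [abs_sub_comm, ← abs_mul]
      exact add_le_add_right (le_abs_self _) _
    _ ≤ d i * x i + M * |x i - y i| := by gcongr; exact hM i

theorem stmt_3_general (n : ℕ)
    (d : Fin n × Fin n → ℝ) (hd : ∀ e, 0 ≤ d e)
    (A : (Fin n ⊕ Fin n) → (Fin n × Fin n) → ℝ)
    (b : (Fin n ⊕ Fin n) → ℝ)
    (M : ℝ) (hM : IsGreatest (Set.range fun e => |d e|) M)
    (S : Set (Fin n × Fin n → ℝ))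
    (hS : S = {x | (∀ e, 0 ≤ x e) ∧ ∑ e, x e = 1})
    (hfeas : ∃ x ∈ S, ∀ v, ∑ e, A v e * x e = b v)
    (hround : ∀ x ∈ S, ∃ x' ∈ S, (∀ v, ∑ e, A v e * x' e = b v) ∧
      (∑ e, |x e - x' e|) ≤ 2 * ∑ v, |(∑ e, A v e * x e) - b v|) :
    sInf {val | ∃ x ∈ S,
        val = (∑ e, d e * x e) + 2 * M * ∑ v, |(∑ e, A v e * x e) - b v|}
      = sInf {val | ∃ x ∈ S, (∀ v, ∑ e, A v e * x e = b v) ∧ val = ∑ e, d e * x e} := by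
  have hdM : ∀ e, |d e| ≤ M := fun e => hM.2 ⟨e, rfl⟩
  obtain ⟨e₀, -⟩ := hM.1
  have hM0 : 0 ≤ M := (abs_nonneg (d e₀)).trans (hdM e₀)
  refine sInf_add_penalty_eq (fun x _ hx => by simp [hx]) ⟨0, ?_⟩ hfeas fun x hx => ?_
  · rintro _ ⟨x, hx, -, rfl⟩
    rw [hS] at hx
    exact sum_nonneg fun e _ => mul_nonneg (hd e) (hx.1 e)
  · obtain ⟨x', hx'S, hx', hclose⟩ := hround x hx
    refine ⟨x', hx'S, hx', ?_⟩
    calc ∑ e, d e * x' e ≤ ∑ e, d e * x e + M * ∑ e, |x e - x' e| :=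
          sum_mul_le_sum_mul_add_mul_sum_abs_sub hdM
      _ ≤ ∑ e, d e * x e + 2 * M * ∑ v, |(∑ e, A v e * x e) - b v| := by
          rw [mul_comm 2 M, mul_assoc]; gcongr

/-- Penalized `ℓ1` regression: the value of
`min_{x ∈ Δᵐ} dᵀx + 2‖d‖_∞ ‖Ax − b‖₁` equals `OPT = min_{x ∈ Δᵐ, Ax = b} dᵀx`,
where `A` is the edge-incidence matrix of the complete `n × n` bipartite graph and
`b` concatenates marginals `r, c ∈ Δⁿ`, given a rounding map turning any `x̃ ∈ Δᵐ`
with `‖Ax̃ − b‖₁ = δ` into a feasible `x̂` with `‖x̃ − x̂‖₁ ≤ 2δ`. -/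
theorem stmt_3 (n : ℕ) (hn : 0 < n)
    (d : Fin n × Fin n → ℝ) (hd : ∀ e, 0 ≤ d e)
    (r c : Fin n → ℝ)
    (hrnn : ∀ i, 0 ≤ r i) (hrsum : ∑ i, r i = 1)
    (hcnn : ∀ j, 0 ≤ c j) (hcsum : ∑ j, c j = 1)
    (A : (Fin n ⊕ Fin n) → (Fin n × Fin n) → ℝ)
    (hA : ∀ v e, A v e = if v = Sum.inl e.1 ∨ v = Sum.inr e.2 then 1 else 0)
    (b : (Fin n ⊕ Fin n) → ℝ) (hb : ∀ v, b v = Sum.elim r c v)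
    (M : ℝ) (hM : IsGreatest (Set.range fun e => |d e|) M)
    (S : Set (Fin n × Fin n → ℝ))
    (hS : S = {x | (∀ e, 0 ≤ x e) ∧ ∑ e, x e = 1})
    (hfeas : ∃ x ∈ S, ∀ v, ∑ e, A v e * x e = b v)
    (hround : ∀ x ∈ S, ∃ x' ∈ S, (∀ v, ∑ e, A v e * x' e = b v) ∧
      (∑ e, |x e - x' e|) ≤ 2 * ∑ v, |(∑ e, A v e * x e) - b v|) :
    sInf {val | ∃ x ∈ S,
        val = (∑ e, d e * x e) + 2 * M * ∑ v, |(∑ e, A v e * x e) - b v|}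
      = sInf {val | ∃ x ∈ S, (∀ v, ∑ e, A v e * x e = b v) ∧ val = ∑ e, d e * x e} :=
  stmt_3_general n d hd A b M hM S hS hfeas hround
end

section
/- Suppose x ∈ Δᵐ and y ∈ [−1,1]^{2n} satisfy, for all u ∈ Δᵐ and v ∈ [−1,1]^{2n}, (dᵀx + 2‖d‖_∞(vᵀAx − bᵀv)) − (dᵀu + 2‖d‖_∞(yᵀAu − bᵀy)) ≤ δ. Then dᵀx + 2‖d‖_∞‖Ax − b‖₁ ≤ δ + OPT, where OPT = min_{u ∈ Δᵐ} dᵀu + 2‖d‖_∞‖Au − b‖₁. -/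
/-!
Instantiate the gap inequality at `v = sign (Ax - b)`, which turns the `x`-side penalty into
`‖Ax - b‖₁`, and bound the `u`-side penalty `yᵀ(Au - b)` by `‖Au - b‖₁`; both are the two
halves of `‖w‖₁ = max_{v ∈ [-1,1]ⁿ} vᵀw`.
-/

open Finset

section
variable {ι : Type*} [Fintype ι]

lemma isGreatest_sum_mul_sum_abs (w : ι → ℝ) :
    IsGreatest {s | ∃ v : ι → ℝ, (∀ i, |v i| ≤ 1) ∧ s = ∑ i, v i * w i} (∑ i, |w i|) := by
  refine ⟨⟨fun i => SignType.sign (w i), fun i => ?_, by simp only [sign_mul_self]⟩, ?_⟩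
  · rcases SignType.trichotomy (SignType.sign (w i)) with h | h | h <;> simp [h]
  · rintro _ ⟨v, hv, rfl⟩
    gcongr with i
    calc v i * w i ≤ |v i| * |w i| := (le_abs_self _).trans (abs_mul _ _).le
      _ ≤ |w i| := mul_le_of_le_one_left (abs_nonneg _) (hv i)

lemma sum_mul_sub_sum_mul (v w b : ι → ℝ) :
    ∑ i, v i * w i - ∑ i, b i * v i = ∑ i, v i * (w i - b i) := by
  simp only [mul_sub, mul_comm (b _), sum_sub_distrib]

end

/-- Duality gap to error: if `x ∈ Δᵐ`, `y ∈ [−1,1]^{2n}` have duality gap at most `δ`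
against all feasible `u, v` for the objective
`dᵀx + 2‖d‖_∞ (yᵀAx − bᵀy)`, then `dᵀx + 2‖d‖_∞ ‖Ax − b‖₁ ≤ δ + OPT`, where
`OPT = min_{u ∈ Δᵐ} dᵀu + 2‖d‖_∞ ‖Au − b‖₁`. -/
theorem stmt_4 (m n : ℕ) (d : Fin m → ℝ)
    (A : Fin (2 * n) → Fin m → ℝ) (b : Fin (2 * n) → ℝ)
    (M : ℝ) (hM : IsGreatest (Set.range fun j => |d j|) M)
    (x : Fin m → ℝ) (hxnn : ∀ j, 0 ≤ x j) (hxsum : ∑ j, x j = 1)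
    (y : Fin (2 * n) → ℝ) (hy : ∀ i, |y i| ≤ 1) (δ : ℝ)
    (hgap : ∀ u : Fin m → ℝ, (∀ j, 0 ≤ u j) → (∑ j, u j) = 1 →
      ∀ v : Fin (2 * n) → ℝ, (∀ i, |v i| ≤ 1) →
      ((∑ j, d j * x j) + 2 * M * ((∑ i, v i * ∑ j, A i j * x j) - ∑ i, b i * v i))
        - ((∑ j, d j * u j) + 2 * M * ((∑ i, y i * ∑ j, A i j * u j) - ∑ i, b i * y i))
        ≤ δ) :
    (∑ j, d j * x j) + 2 * M * (∑ i, |(∑ j, A i j * x j) - b i|)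
      ≤ δ + sInf {val | ∃ u : Fin m → ℝ, (∀ j, 0 ≤ u j) ∧ (∑ j, u j) = 1 ∧
          val = (∑ j, d j * u j) + 2 * M * (∑ i, |(∑ j, A i j * u j) - b i|)} := by
  obtain ⟨j₀, rfl⟩ := hM.1
  rw [← sub_le_iff_le_add']
  refine le_csInf ⟨_, x, hxnn, hxsum, rfl⟩ ?_
  rintro _ ⟨u, hu, husum, rfl⟩
  obtain ⟨v, hv, hvx⟩ := (isGreatest_sum_mul_sum_abs fun i => (∑ j, A i j * x j) - b i).1
  have hyu := (isGreatest_sum_mul_sum_abs fun i => (∑ j, A i j * u j) - b i).2 ⟨y, hy, rfl⟩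
  have hvu := hgap u hu husum v hv
  rw [sum_mul_sub_sum_mul, sum_mul_sub_sum_mul, ← hvx] at hvu
  have := mul_le_mul_of_nonneg_left hyu (by positivity : 0 ≤ 2 * |d j₀|)
  linarith
end

section
/- Suppose r is κ-area-convex with respect to operator g and Θ ≥ r(u) − r(z̄) where z̄ minimizes r. Then the dual extrapolation iterates z_t = prox_{z̄}(s_t), w_t = prox_{z̄}(s_t + g(z_t)/κ), s_{t+1} = s_t + g(w_t)/(2κ), starting from s_0 = 0, satisfy (1/T) Σ_{t=0}^{T−1} ⟨g(w_t), w_t − u⟩ ≤ 2κΘ/T, and hence for linear g, ⟨g(w̄), w̄ − u⟩ ≤ 2κΘ/T for w̄ = (1/T)Σ w_t. -/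
/-!
Let `Φ_t = ⟨s_t, z_t⟩ + V(z_t)` be the optimal value of the prox problem at `s_t`. Testing the
optimality of `z_t` at the centroid of `z_t, w_t, z_{t+1}` and that of `w_t` at `z_{t+1}`,
κ-area-convexity of `V` (which differs from `r` by an affine function) yields
`2κ Φ_t + ⟨g(w_t), w_t⟩ ≤ 2κ Φ_{t+1}`. Telescoping, with `Φ_0 = V(z_0) ≥ 0`,
`Φ_T ≤ ⟨s_T, u⟩ + V(u)` and `2κ s_T = Σ_t g(w_t)`, bounds the regret `Σ_t ⟨g(w_t), w_t - u⟩` by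
`2κ V(u) ≤ 2κΘ`. For `g x = J x + j₀` with `J` skew, `⟨g(x), x - u⟩` is affine in `x`, so the
averaged regret is the gap at `w̄`.
-/

open Finset Matrix

lemma Convex.centroid_mem {E : Type*} [AddCommGroup E] [Module ℝ E] {D : Set E}
    (hD : Convex ℝ D) {a b c : E} (ha : a ∈ D) (hb : b ∈ D) (hc : c ∈ D) :
    (3 : ℝ)⁻¹ • (a + b + c) ∈ D := by
  have h := hD.sum_mem (t := univ) (w := fun _ : Fin 3 => (3 : ℝ)⁻¹) (z := ![a, b, c])
    (fun _ _ => by norm_num) (by simp) (fun i _ => by fin_cases i <;> assumption)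
  simpa [Fin.sum_univ_three, smul_add, add_assoc] using h

variable {ι : Type*} [Fintype ι]

def AreaConvexOn (κ : ℝ) (D : Set (ι → ℝ)) (r : (ι → ℝ) → ℝ) (g : (ι → ℝ) → ι → ℝ) : Prop :=
  ∀ a ∈ D, ∀ b ∈ D, ∀ c ∈ D,
    (g b - g a) ⬝ᵥ (b - c) ≤ κ * (r a + r b + r c - 3 * r ((3 : ℝ)⁻¹ • (a + b + c)))

section DualExtrapolation

variable {κ : ℝ} {D : Set (ι → ℝ)} {V : (ι → ℝ) → ℝ} {g : (ι → ℝ) → ι → ℝ}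

lemma AreaConvexOn.add_affine (h : AreaConvexOn κ D V g) (p : ι → ℝ) (c : ℝ) :
    AreaConvexOn κ D (fun x => V x + p ⬝ᵥ x + c) g := by
  intro a ha b hb c' hc
  convert h a ha b hb c' hc using 2
  simp only [dotProduct_smul, dotProduct_add, smul_eq_mul]
  ring

lemma dualExtrapolation_step (hD : Convex ℝ D) (hκ : 0 < κ) (hV : AreaConvexOn κ D V g)
    {s z w z' : ι → ℝ} (hzD : z ∈ D) (hwD : w ∈ D) (hz'D : z' ∈ D)
    (hz : IsMinOn (fun y => s ⬝ᵥ y + V y) D z)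
    (hw : IsMinOn (fun y => (s + (1 / κ) • g z) ⬝ᵥ y + V y) D w) :
    2 * κ * (s ⬝ᵥ z + V z) + g w ⬝ᵥ w
      ≤ 2 * κ * ((s + (1 / (2 * κ)) • g w) ⬝ᵥ z' + V z') := by
  have hzm := isMinOn_iff.mp hz _ (hD.centroid_mem hzD hwD hz'D)
  have hwz' := isMinOn_iff.mp hw z' hz'D
  have harea := hV z hzD w hwD z' hz'D
  simp only [dotProduct_smul, dotProduct_add, add_dotProduct, smul_dotProduct, sub_dotProduct,
    dotProduct_sub, smul_eq_mul] at hzm hwz' harea ⊢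
  field_simp at hwz' ⊢
  linear_combination harea + hwz' + 3 * κ * hzm

theorem dualExtrapolation_regret_le (hD : Convex ℝ D) (hκ : 0 < κ) (hV : AreaConvexOn κ D V g)
    (hV_nonneg : ∀ x ∈ D, 0 ≤ V x) {s z w : ℕ → ι → ℝ} (hs0 : s 0 = 0)
    (hs : ∀ t, s (t + 1) = s t + (1 / (2 * κ)) • g (w t))
    (hzD : ∀ t, z t ∈ D) (hz : ∀ t, IsMinOn (fun y => s t ⬝ᵥ y + V y) D (z t))
    (hwD : ∀ t, w t ∈ D)
    (hw : ∀ t, IsMinOn (fun y => (s t + (1 / κ) • g (z t)) ⬝ᵥ y + V y) D (w t))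
    {u : ι → ℝ} (hu : u ∈ D) (T : ℕ) :
    ∑ t ∈ range T, g (w t) ⬝ᵥ (w t - u) ≤ 2 * κ * V u := by
  have hsT : 2 * κ * (s T ⬝ᵥ u) = ∑ t ∈ range T, g (w t) ⬝ᵥ u := by
    induction T with
    | zero => simp [hs0]
    | succ T ih =>
      rw [sum_range_succ, ← ih, hs, add_dotProduct, smul_dotProduct, smul_eq_mul]
      field_simp
  set Φ : ℕ → ℝ := fun t => 2 * κ * (s t ⬝ᵥ z t + V (z t))
  have hΦ0 : 0 ≤ Φ 0 := by
    simpa [Φ, hs0] using mul_nonneg (by positivity : (0 : ℝ) ≤ 2 * κ) (hV_nonneg _ (hzD 0))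
  have hΦT : Φ T ≤ 2 * κ * (s T ⬝ᵥ u + V u) :=
    mul_le_mul_of_nonneg_left (isMinOn_iff.mp (hz T) u hu) (by positivity)
  have hsum : ∑ t ∈ range T, g (w t) ⬝ᵥ w t ≤ Φ T - Φ 0 := by
    rw [← sum_range_sub Φ]
    refine sum_le_sum fun t _ => ?_
    have := dualExtrapolation_step hD hκ hV (hzD t) (hwD t) (hzD (t + 1)) (hz t) (hw t)
    rw [← hs] at this
    linarith
  simp only [dotProduct_sub, sum_sub_distrib]
  linarith

end DualExtrapolation

lemma skew_add_const_gap (J : (ι → ℝ) →ₗ[ℝ] ι → ℝ) (hJ : ∀ x, J x ⬝ᵥ x = 0) (j₀ x u : ι → ℝ) :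
    (J x + j₀) ⬝ᵥ (x - u) = j₀ ⬝ᵥ x - J x ⬝ᵥ u - j₀ ⬝ᵥ u := by
  rw [add_dotProduct, dotProduct_sub, dotProduct_sub, hJ]
  ring

lemma skew_add_const_gap_average (J : (ι → ℝ) →ₗ[ℝ] ι → ℝ) (hJ : ∀ x, J x ⬝ᵥ x = 0)
    (j₀ u : ι → ℝ) {α : Type*} {S : Finset α} (hS : S.Nonempty) (w : α → ι → ℝ) :
    (J ((#S : ℝ)⁻¹ • ∑ t ∈ S, w t) + j₀) ⬝ᵥ ((#S : ℝ)⁻¹ • ∑ t ∈ S, w t - u) =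
      (#S : ℝ)⁻¹ * ∑ t ∈ S, (J (w t) + j₀) ⬝ᵥ (w t - u) := by
  have hS' : (#S : ℝ) ≠ 0 := by simpa using hS.ne_empty
  rw [skew_add_const_gap J hJ]
  simp only [skew_add_const_gap J hJ, sum_sub_distrib, sum_const, nsmul_eq_mul, map_smul,
    map_sum, dotProduct_smul, smul_dotProduct, dotProduct_sum, sum_dotProduct, smul_eq_mul]
  field_simp

theorem stmt_10_general (N T : ℕ) (hT : 0 < T)
    (D : Set (Fin N → ℝ)) (hD : Convex ℝ D)
    (r : (Fin N → ℝ) → ℝ) (g : (Fin N → ℝ) → (Fin N → ℝ))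
    (κ : ℝ) (hκ : 0 < κ)
    (harea : ∀ a ∈ D, ∀ b ∈ D, ∀ c ∈ D,
      κ * (r a + r b + r c - 3 * r ((3 : ℝ)⁻¹ • (a + b + c)))
        ≥ ∑ i, (g b - g a) i * (b - c) i)
    (J : (Fin N → ℝ) →ₗ[ℝ] (Fin N → ℝ)) (j₀ : Fin N → ℝ)
    (hg : ∀ x, g x = J x + j₀)
    (hJanti : ∀ x, ∑ i, J x i * x i = 0)
    (zbar : Fin N → ℝ)
    (gr : Fin N → ℝ)
    (hsub : ∀ u ∈ D, r zbar + ∑ i, gr i * (u - zbar) i ≤ r u)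
    (hfo : ∀ u ∈ D, 0 ≤ ∑ i, gr i * (u - zbar) i)
    (V : (Fin N → ℝ) → ℝ)
    (hV : ∀ w', V w' = r w' - r zbar - ∑ i, gr i * (w' - zbar) i)
    (u : Fin N → ℝ) (hu : u ∈ D) (Θ : ℝ) (hΘ : r u - r zbar ≤ Θ)
    (s z w : ℕ → Fin N → ℝ)
    (hs0 : s 0 = 0)
    (hsrec : ∀ t, s (t + 1) = s t + (1 / (2 * κ)) • g (w t))
    (hz : ∀ t, z t ∈ D ∧ ∀ u' ∈ D,
      (∑ i, s t i * z t i) + V (z t) ≤ (∑ i, s t i * u' i) + V u')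
    (hw : ∀ t, w t ∈ D ∧ ∀ u' ∈ D,
      (∑ i, (s t + (1 / κ) • g (z t)) i * w t i) + V (w t)
        ≤ (∑ i, (s t + (1 / κ) • g (z t)) i * u' i) + V u')
    (wbar : Fin N → ℝ) (hwbar : wbar = (T : ℝ)⁻¹ • ∑ t ∈ Finset.range T, w t) :
    ((T : ℝ)⁻¹ * (∑ t ∈ Finset.range T, ∑ i, g (w t) i * (w t - u) i) ≤ 2 * κ * Θ / T) ∧
    (∑ i, g wbar i * (wbar - u) i ≤ 2 * κ * Θ / T) := by
  have hV_affine : V = fun x => r x + (-gr) ⬝ᵥ x + (gr ⬝ᵥ zbar - r zbar) := by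
    funext x
    rw [hV, ← dotProduct, neg_dotProduct, dotProduct_sub]
    ring
  have hV_area : AreaConvexOn κ D V g := hV_affine ▸ AreaConvexOn.add_affine harea _ _
  have hV_nonneg : ∀ x ∈ D, 0 ≤ V x := fun x hx => by linarith [hV x, hsub x hx]
  have hVu : V u ≤ Θ := by linarith [hV u, hfo u hu]
  have hregret : ∑ t ∈ range T, g (w t) ⬝ᵥ (w t - u) ≤ 2 * κ * Θ :=
    (dualExtrapolation_regret_le hD hκ hV_area hV_nonneg hs0 hsrec (fun t => (hz t).1)
      (fun t => isMinOn_iff.mpr (hz t).2) (fun t => (hw t).1) (fun t => isMinOn_iff.mpr (hw t).2)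
      hu T).trans (by gcongr)
  have hmean : (T : ℝ)⁻¹ * ∑ t ∈ range T, g (w t) ⬝ᵥ (w t - u) ≤ 2 * κ * Θ / T := by
    rw [div_eq_inv_mul]
    gcongr
  refine ⟨hmean, ?_⟩
  obtain rfl : g = fun x => J x + j₀ := funext hg
  have hgap := skew_add_const_gap_average J hJanti j₀ u (nonempty_range_iff.mpr hT.ne') w
  rw [card_range] at hgap
  subst hwbar
  exact hgap.trans_le hmean

/-- Dual extrapolation convergence: if `r` is `κ`-area-convex with respect to `g`
(the affine gradient operator of a convex-concave bilinear objective, `g z = Jz + j₀`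
with `J` antisymmetric), `z̄` minimizes `r` over the convex domain `D` (with
first-order optimality, `gr` a subgradient of `r` at `z̄`), and
`Θ ≥ r(u) − r(z̄)`, then the iterates `z_t = prox_{z̄}(s_t)`,
`w_t = prox_{z̄}(s_t + g(z_t)/κ)`, `s_{t+1} = s_t + g(w_t)/(2κ)`, `s_0 = 0`, satisfy
`(1/T) Σ_{t<T} ⟨g(w_t), w_t − u⟩ ≤ 2κΘ/T`, and hence
`⟨g(w̄), w̄ − u⟩ ≤ 2κΘ/T` for `w̄ = (1/T) Σ_{t<T} w_t`. -/
theorem stmt_10 (N T : ℕ) (hT : 0 < T)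
    (D : Set (Fin N → ℝ)) (hD : Convex ℝ D)
    (r : (Fin N → ℝ) → ℝ) (g : (Fin N → ℝ) → (Fin N → ℝ))
    (κ : ℝ) (hκ : 0 < κ)
    (harea : ∀ a ∈ D, ∀ b ∈ D, ∀ c ∈ D,
      κ * (r a + r b + r c - 3 * r ((3 : ℝ)⁻¹ • (a + b + c)))
        ≥ ∑ i, (g b - g a) i * (b - c) i)
    (J : (Fin N → ℝ) →ₗ[ℝ] (Fin N → ℝ)) (j₀ : Fin N → ℝ)
    (hg : ∀ x, g x = J x + j₀)
    (hJanti : ∀ x, ∑ i, J x i * x i = 0)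
    (zbar : Fin N → ℝ) (hzbarD : zbar ∈ D)
    (hzbarmin : ∀ u ∈ D, r zbar ≤ r u)
    (gr : Fin N → ℝ)
    (hsub : ∀ u ∈ D, r zbar + ∑ i, gr i * (u - zbar) i ≤ r u)
    (hfo : ∀ u ∈ D, 0 ≤ ∑ i, gr i * (u - zbar) i)
    (V : (Fin N → ℝ) → ℝ)
    (hV : ∀ w', V w' = r w' - r zbar - ∑ i, gr i * (w' - zbar) i)
    (u : Fin N → ℝ) (hu : u ∈ D) (Θ : ℝ) (hΘ : r u - r zbar ≤ Θ)
    (s z w : ℕ → Fin N → ℝ)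
    (hs0 : s 0 = 0)
    (hsrec : ∀ t, s (t + 1) = s t + (1 / (2 * κ)) • g (w t))
    (hz : ∀ t, z t ∈ D ∧ ∀ u' ∈ D,
      (∑ i, s t i * z t i) + V (z t) ≤ (∑ i, s t i * u' i) + V u')
    (hw : ∀ t, w t ∈ D ∧ ∀ u' ∈ D,
      (∑ i, (s t + (1 / κ) • g (z t)) i * w t i) + V (w t)
        ≤ (∑ i, (s t + (1 / κ) • g (z t)) i * u' i) + V u')
    (wbar : Fin N → ℝ) (hwbar : wbar = (T : ℝ)⁻¹ • ∑ t ∈ Finset.range T, w t) :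
    ((T : ℝ)⁻¹ * (∑ t ∈ Finset.range T, ∑ i, g (w t) i * (w t - u) i) ≤ 2 * κ * Θ / T) ∧
    (∑ i, g wbar i * (wbar - u) i ≤ 2 * κ * Θ / T) :=
  stmt_10_general N T hT D hD r g κ hκ harea J j₀ hg hJanti zbar gr hsub hfo V hV u hu Θ hΘ s z w
    hs0 hsrec hz hw wbar hwbar
end

section
/- Under the hypotheses of the dual extrapolation convergence lemma (κ-area-convex r, range bound Θ), the key per-step inequality holds: (1/(2κ))⟨g(w_t), w_t − z̄⟩ ≤ ⟨s_{t+1}, z_{t+1} − z̄⟩ + V_{z̄}(z_{t+1}) − ⟨s_t, z_t − z̄⟩ − V_{z̄}(z_t). -/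
/-!
Test the optimality of `z_t` at the centroid `c` of `z_t, w_t, z_{t+1}` and that of `w_t` at
`z_{t+1}`, and apply area convexity to `(z_t, w_t, z_{t+1})`; area convexity passes from `r` to
`V` because `V - r` is affine, so its centroid defect vanishes. Adding the three inequalities,
`V c` and the terms `⟨g z_t, ·⟩` cancel and what remains is twice the claim.
-/

open Matrix

theorem Convex.inv_three_smul_add_add_mem {𝕜 E : Type*} [Field 𝕜] [LinearOrder 𝕜]
    [IsStrictOrderedRing 𝕜] [AddCommGroup E] [Module 𝕜 E] {D : Set E} (hD : Convex 𝕜 D)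
    {a b c : E} (ha : a ∈ D) (hb : b ∈ D) (hc : c ∈ D) :
    (3 : 𝕜)⁻¹ • (a + b + c) ∈ D := by
  have h := hD.sum_mem (t := Finset.univ) (w := fun _ : Fin 3 => (3 : 𝕜)⁻¹) (z := ![a, b, c])
    (fun _ _ => by positivity) (by simp) (fun i _ => by fin_cases i <;> assumption)
  simpa [Fin.sum_univ_three, smul_add] using h

theorem bregman_centroid_defect_eq {ι 𝕜 : Type*} [Fintype ι] [Field 𝕜] [CharZero 𝕜]
    {r V : (ι → 𝕜) → 𝕜} {zbar gr : ι → 𝕜}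
    (hV : ∀ w, V w = r w - r zbar - gr ⬝ᵥ (w - zbar)) (a b c : ι → 𝕜) :
    V a + V b + V c - 3 * V ((3 : 𝕜)⁻¹ • (a + b + c))
      = r a + r b + r c - 3 * r ((3 : 𝕜)⁻¹ • (a + b + c)) := by
  simp only [hV, dotProduct_sub, dotProduct_add, dotProduct_smul, smul_eq_mul]
  field_simp
  ring

theorem dualExtrapolation_step_le {ι 𝕜 : Type*} [Fintype ι] [Field 𝕜] [LinearOrder 𝕜]
    [IsStrictOrderedRing 𝕜] (V : (ι → 𝕜) → 𝕜) (g : (ι → 𝕜) → ι → 𝕜) {κ : 𝕜} (hκ : 0 < κ)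
    {s z w z' : ι → 𝕜}
    (hz : s ⬝ᵥ z + V z
      ≤ s ⬝ᵥ ((3 : 𝕜)⁻¹ • (z + w + z')) + V ((3 : 𝕜)⁻¹ • (z + w + z')))
    (hw : (s + (1 / κ) • g z) ⬝ᵥ w + V w ≤ (s + (1 / κ) • g z) ⬝ᵥ z' + V z')
    (harea : (g w - g z) ⬝ᵥ (w - z')
      ≤ κ * (V z + V w + V z' - 3 * V ((3 : 𝕜)⁻¹ • (z + w + z')))) :
    1 / (2 * κ) * g w ⬝ᵥ (w - z') ≤ s ⬝ᵥ (z' - z) + V z' - V z := by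
  set c := (3 : 𝕜)⁻¹ • (z + w + z')
  have hsc : s ⬝ᵥ c = (3 : 𝕜)⁻¹ * (s ⬝ᵥ z + s ⬝ᵥ w + s ⬝ᵥ z') := by
    simp only [c, dotProduct_smul, dotProduct_add, smul_eq_mul]
  have hw' : κ * (s ⬝ᵥ w) + g z ⬝ᵥ w + κ * V w ≤ κ * (s ⬝ᵥ z') + g z ⬝ᵥ z' + κ * V z' := by
    have := mul_le_mul_of_nonneg_left hw hκ.le
    simp only [add_dotProduct, smul_dotProduct, smul_eq_mul] at this
    field_simp at this
    linarith
  have hz' := mul_le_mul_of_nonneg_left hz hκ.le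
  rw [hsc] at hz'
  simp only [sub_dotProduct, dotProduct_sub] at harea ⊢
  rw [div_mul_eq_mul_div, div_le_iff₀ (by positivity)]
  linarith

theorem stmt_11_general (N : ℕ)
    (D : Set (Fin N → ℝ)) (hD : Convex ℝ D)
    (r : (Fin N → ℝ) → ℝ) (g : (Fin N → ℝ) → (Fin N → ℝ))
    (κ : ℝ) (hκ : 0 < κ)
    (harea : ∀ a ∈ D, ∀ b ∈ D, ∀ c ∈ D,
      κ * (r a + r b + r c - 3 * r ((3 : ℝ)⁻¹ • (a + b + c)))
        ≥ ∑ i, (g b - g a) i * (b - c) i)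
    (zbar : Fin N → ℝ)
    (gr : Fin N → ℝ)
    (V : (Fin N → ℝ) → ℝ)
    (hV : ∀ w', V w' = r w' - r zbar - ∑ i, gr i * (w' - zbar) i)
    (st st1 zt wt zt1 : Fin N → ℝ)
    (hztD : zt ∈ D) (hwtD : wt ∈ D) (hzt1D : zt1 ∈ D)
    (hst1 : st1 = st + (1 / (2 * κ)) • g wt)
    (hztmin : ∀ u ∈ D, (∑ i, st i * zt i) + V zt ≤ (∑ i, st i * u i) + V u)
    (hwtmin : ∀ u ∈ D,
      (∑ i, (st + (1 / κ) • g zt) i * wt i) + V wt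
        ≤ (∑ i, (st + (1 / κ) • g zt) i * u i) + V u) :
    (1 / (2 * κ)) * ∑ i, g wt i * (wt - zbar) i
      ≤ (∑ i, st1 i * (zt1 - zbar) i) + V zt1
        - (∑ i, st i * (zt - zbar) i) - V zt := by
  have hcD := hD.inv_three_smul_add_add_mem hztD hwtD hzt1D
  have hareaV : (g wt - g zt) ⬝ᵥ (wt - zt1)
      ≤ κ * (V zt + V wt + V zt1 - 3 * V ((3 : ℝ)⁻¹ • (zt + wt + zt1))) := by
    rw [bregman_centroid_defect_eq hV]
    exact harea zt hztD wt hwtD zt1 hzt1D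
  have hstep := dualExtrapolation_step_le V g hκ (hztmin _ hcD) (hwtmin zt1 hzt1D) hareaV
  -- `zbar` cancels: the inequality only involves differences of the iterates.
  change 1 / (2 * κ) * g wt ⬝ᵥ (wt - zbar)
    ≤ st1 ⬝ᵥ (zt1 - zbar) + V zt1 - st ⬝ᵥ (zt - zbar) - V zt
  simp only [hst1, dotProduct_sub, add_dotProduct, smul_dotProduct, smul_eq_mul] at hstep ⊢
  linarith

/-- Key per-step inequality of dual extrapolation: with `r` `κ`-area-convex with
respect to `g`, `z_t = prox_{z̄}(s_t)`, `w_t = prox_{z̄}(s_t + g(z_t)/κ)` and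
`s_{t+1} = s_t + g(w_t)/(2κ)`,
`(1/(2κ)) ⟨g(w_t), w_t − z̄⟩ ≤ ⟨s_{t+1}, z_{t+1} − z̄⟩ + V_{z̄}(z_{t+1})
  − ⟨s_t, z_t − z̄⟩ − V_{z̄}(z_t)`. -/
theorem stmt_11 (N : ℕ)
    (D : Set (Fin N → ℝ)) (hD : Convex ℝ D)
    (r : (Fin N → ℝ) → ℝ) (g : (Fin N → ℝ) → (Fin N → ℝ))
    (κ : ℝ) (hκ : 0 < κ)
    (harea : ∀ a ∈ D, ∀ b ∈ D, ∀ c ∈ D,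
      κ * (r a + r b + r c - 3 * r ((3 : ℝ)⁻¹ • (a + b + c)))
        ≥ ∑ i, (g b - g a) i * (b - c) i)
    (zbar : Fin N → ℝ) (hzbarD : zbar ∈ D)
    (gr : Fin N → ℝ)
    (V : (Fin N → ℝ) → ℝ)
    (hV : ∀ w', V w' = r w' - r zbar - ∑ i, gr i * (w' - zbar) i)
    (st st1 zt wt zt1 : Fin N → ℝ)
    (hztD : zt ∈ D) (hwtD : wt ∈ D) (hzt1D : zt1 ∈ D)
    (hst1 : st1 = st + (1 / (2 * κ)) • g wt)
    (hztmin : ∀ u ∈ D, (∑ i, st i * zt i) + V zt ≤ (∑ i, st i * u i) + V u)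
    (hwtmin : ∀ u ∈ D,
      (∑ i, (st + (1 / κ) • g zt) i * wt i) + V wt
        ≤ (∑ i, (st + (1 / κ) • g zt) i * u i) + V u) :
    (1 / (2 * κ)) * ∑ i, g wt i * (wt - zbar) i
      ≤ (∑ i, st1 i * (zt1 - zbar) i) + V zt1
        - (∑ i, st i * (zt - zbar) i) - V zt :=
  stmt_11_general N D hD r g κ hκ harea zbar gr V hV st st1 zt wt zt1 hztD hwtD hzt1D hst1 hztmin
    hwtmin
end

section
/- Let f(x,y) be twice-differentiable and jointly convex on a product of convex sets X × Y. Consider alternating minimization: x_{k+1} = argmin_x f(x, y_k), y_{k+1} = argmin_y f(x_{k+1}, y). Suppose convex sets X_{k+1} ⊆ X containing x_{k+1} and Y_k ⊆ Y containing y_k exist such that for all x' ∈ X_{k+1}, y', y'' ∈ Y_k and some σ ≥ 1, ∇²f(x',y') ⪰ (1/σ)∇²_{yy}f(x_{k+1}, y''). Then for any x* ∈ X_{k+1}, y* ∈ Y_k: f(x_{k+1}, y_k) − f(x_{k+1}, y_{k+1}) ≥ (1/σ)(f(x_{k+1}, y_k) − f(x*, y*)). -/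
/-!
With `z = (x_{k+1}, y_k)`, `w = (x* - x_{k+1}, y* - y_k)` and `v = (0, y* - y_k)` we have
`z + w = (x*, y*)` and `z + σ⁻¹ v = (x_{k+1}, ỹ)`. The Hessian hypothesis gives
`∇²f(z + t σ⁻¹ v)[σ⁻¹ v, σ⁻¹ v] ≤ σ⁻¹ ∇²f(z + t w)[w, w]` for `t ∈ [0, 1]`, so the second-order
Taylor remainders of `f` at `z` in the directions `σ⁻¹ v` and `w` compare the same way. The
first-order terms differ by `σ⁻¹ ∇f(z)[(x* - x_{k+1}, 0)] ≥ 0` by optimality of `x_{k+1}`, whence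
`f(x_{k+1}, ỹ) - f(z) ≤ σ⁻¹ (f(x*, y*) - f(z))`; finally `f(x_{k+1}, y_{k+1}) ≤ f(x_{k+1}, ỹ)`.
-/

open Set

lemma add_deriv_le_of_hasDerivAt2_nonneg {g g' g'' : ℝ → ℝ}
    (hg : ∀ t, HasDerivAt g (g' t) t) (hg' : ∀ t, HasDerivAt g' (g'' t) t)
    (hg'' : ∀ t ∈ Ioo (0 : ℝ) 1, 0 ≤ g'' t) :
    g 0 + g' 0 ≤ g 1 := by
  have hconvex : ConvexOn ℝ (Icc 0 1) g := by
    refine convexOn_of_hasDerivWithinAt2_nonneg (convex_Icc 0 1)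
      (fun t _ ↦ (hg t).continuousAt.continuousWithinAt)
      (fun t _ ↦ (hg t).hasDerivWithinAt) (fun t _ ↦ (hg' t).hasDerivWithinAt) ?_
    simpa only [interior_Icc] using hg''
  have := hconvex.le_slope_of_hasDerivAt (left_mem_Icc.2 zero_le_one)
    (right_mem_Icc.2 zero_le_one) zero_lt_one (hg 0)
  rw [slope_def_field, sub_zero, div_one] at this
  linarith

section Line

variable {E G : Type*} [NormedAddCommGroup E] [NormedSpace ℝ E]
  [NormedAddCommGroup G] [NormedSpace ℝ G]

lemma hasDerivAt_comp_add_smul {φ : E → G} {φ' : E → E →L[ℝ] G}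
    (hφ : ∀ z, HasFDerivAt φ (φ' z) z) (z w : E) (t : ℝ) :
    HasDerivAt (fun s : ℝ ↦ φ (z + s • w)) (φ' (z + t • w) w) t := by
  have hline : HasDerivAt (fun s : ℝ ↦ z + s • w) w t := by
    simpa using ((hasDerivAt_id t).smul_const w).const_add z
  exact (hφ _).comp_hasDerivAt t hline

variable {f : E → ℝ} {f' : E → E →L[ℝ] ℝ} {f'' : E → E →L[ℝ] E →L[ℝ] ℝ}

lemma hasDerivAt_fderiv_comp_add_smul (hf'' : ∀ z, HasFDerivAt f' (f'' z) z) (z w : E) (t : ℝ) :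
    HasDerivAt (fun s : ℝ ↦ f' (z + s • w) w) (f'' (z + t • w) w w) t := by
  simpa using (hasDerivAt_comp_add_smul hf'' z w t).clm_apply (hasDerivAt_const t w)

/-- Taylor remainders are compared through `t ↦ c f(z + t w) - f(z + t u)`, which is convex on
`[0, 1]` by the hypothesis on the second derivatives. -/
lemma taylor_remainder_le_of_hessian_le
    (hf' : ∀ z, HasFDerivAt f (f' z) z) (hf'' : ∀ z, HasFDerivAt f' (f'' z) z)
    (z u w : E) (c : ℝ)
    (hle : ∀ t ∈ Ioo (0 : ℝ) 1, f'' (z + t • u) u u ≤ c * f'' (z + t • w) w w) :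
    f (z + u) - f z - f' z u ≤ c * (f (z + w) - f z - f' z w) := by
  have key := add_deriv_le_of_hasDerivAt2_nonneg
    (g := fun t ↦ c * f (z + t • w) - f (z + t • u))
    (fun t ↦ ((hasDerivAt_comp_add_smul hf' z w t).const_mul c).sub
      (hasDerivAt_comp_add_smul hf' z u t))
    (fun t ↦ ((hasDerivAt_fderiv_comp_add_smul hf'' z w t).const_mul c).sub
      (hasDerivAt_fderiv_comp_add_smul hf'' z u t))
    (fun t ht ↦ sub_nonneg.2 (hle t ht))
  simp only [zero_smul, add_zero, one_smul] at key
  linarith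

end Line

lemma fderiv_inl_nonneg_of_isMinOn {E F : Type*} [NormedAddCommGroup E] [NormedSpace ℝ E]
    [NormedAddCommGroup F] [NormedSpace ℝ F] {f : E × F → ℝ} {f' : E × F →L[ℝ] ℝ}
    {S : Set E} {x₀ x : E} {y : F} (hf : HasFDerivAt f f' (x₀, y)) (hS : Convex ℝ S)
    (hx₀ : x₀ ∈ S) (hx : x ∈ S) (hmin : IsMinOn (fun x ↦ f (x, y)) S x₀) :
    0 ≤ f' (x - x₀, 0) := by
  have hmin' : IsMinOn f (S ×ˢ {y}) (x₀, y) := by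
    rintro ⟨x, y'⟩ ⟨hx, rfl : y' = y⟩
    exact hmin hx
  have hseg := (hS.prod (convex_singleton y)).segment_subset
    (show (x₀, y) ∈ S ×ˢ {y} from ⟨hx₀, rfl⟩) (show (x, y) ∈ S ×ˢ {y} from ⟨hx, rfl⟩)
  simpa using hmin'.localize.hasFDerivWithinAt_nonneg hf.hasFDerivWithinAt
    (sub_mem_posTangentConeAt_of_segment_subset hseg)

theorem stmt_13_general (a b : ℕ)
    (X : Set (Fin a → ℝ)) (Y : Set (Fin b → ℝ))
    (f : (Fin a → ℝ) × (Fin b → ℝ) → ℝ)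
    (f' : (Fin a → ℝ) × (Fin b → ℝ) → ((Fin a → ℝ) × (Fin b → ℝ)) →L[ℝ] ℝ)
    (f'' : (Fin a → ℝ) × (Fin b → ℝ) →
      ((Fin a → ℝ) × (Fin b → ℝ)) →L[ℝ] ((Fin a → ℝ) × (Fin b → ℝ)) →L[ℝ] ℝ)
    (hf' : ∀ z, HasFDerivAt f (f' z) z)
    (hf'' : ∀ z, HasFDerivAt f' (f'' z) z)
    (σ : ℝ) (hσ : 1 ≤ σ)
    (yk : Fin b → ℝ)
    (xk1 : Fin a → ℝ)
    (hxk1min : ∀ x ∈ X, f (xk1, yk) ≤ f (x, yk))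
    (yk1 : Fin b → ℝ)
    (hyk1min : ∀ y ∈ Y, f (xk1, yk1) ≤ f (xk1, y))
    (Xk1 : Set (Fin a → ℝ)) (Yk : Set (Fin b → ℝ))
    (hXk1conv : Convex ℝ Xk1) (hYkconv : Convex ℝ Yk)
    (hXk1sub : Xk1 ⊆ X) (hYksub : Yk ⊆ Y)
    (hxk1mem : xk1 ∈ Xk1) (hykmem : yk ∈ Yk)
    (hdom : ∀ x' ∈ Xk1, ∀ y' ∈ Yk, ∀ y'' ∈ Yk,
      ∀ w : (Fin a → ℝ) × (Fin b → ℝ),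
        f'' (x', y') w w ≥ (1 / σ) * f'' (xk1, y'') (0, w.2) (0, w.2)) :
    ∀ xs ∈ Xk1, ∀ ys ∈ Yk,
      f (xk1, yk) - f (xk1, yk1) ≥ (1 / σ) * (f (xk1, yk) - f (xs, ys)) := by
  intro xs hxs ys hys
  have hσinv : σ⁻¹ ∈ Icc (0 : ℝ) 1 :=
    ⟨inv_nonneg.2 (zero_le_one.trans hσ), inv_le_one_of_one_le₀ hσ⟩
  set z : (Fin a → ℝ) × (Fin b → ℝ) := (xk1, yk)
  set v : (Fin a → ℝ) × (Fin b → ℝ) := (0, ys - yk)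
  set w : (Fin a → ℝ) × (Fin b → ℝ) := (xs - xk1, ys - yk)
  have hremainder := taylor_remainder_le_of_hessian_le hf' hf'' z (σ⁻¹ • v) w σ⁻¹ fun t ht ↦ by
    have hdomt := hdom _ (hXk1conv.add_smul_sub_mem hxk1mem hxs (Ioo_subset_Icc_self ht))
      _ (hYkconv.add_smul_sub_mem hykmem hys (Ioo_subset_Icc_self ht))
      _ (hYkconv.add_smul_sub_mem hykmem hys
        ⟨mul_nonneg ht.1.le hσinv.1, mul_le_one₀ ht.2.le hσinv.1 hσinv.2⟩) w
    simp only [map_smul, smul_apply, smul_eq_mul, smul_smul]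
    simp only [z, v, w, one_div, ge_iff_le, Prod.smul_mk, Prod.mk_add_mk, smul_zero, add_zero]
      at hdomt ⊢
    exact mul_le_mul_of_nonneg_left hdomt hσinv.1
  have hfirst : 0 ≤ f' z (xs - xk1, 0) :=
    fderiv_inl_nonneg_of_isMinOn (hf' z) hXk1conv hxk1mem hxs fun x hx ↦ hxk1min x (hXk1sub hx)
  have hsplit : f' z w = f' z (xs - xk1, 0) + f' z v := by
    rw [← map_add, Prod.mk_add_mk, add_zero, zero_add]
  have hnext : f (xk1, yk1) ≤ f (z + σ⁻¹ • v) := by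
    simpa [z, v] using hyk1min _ (hYksub (hYkconv.add_smul_sub_mem hykmem hys hσinv))
  have hw : z + w = (xs, ys) := by simp [z, w]
  rw [hw, map_smul, smul_eq_mul, hsplit] at hremainder
  rw [one_div]
  linarith [mul_nonneg hσinv.1 hfirst]

/-- Per-iteration progress of alternating minimization: let `f` be twice
differentiable and jointly convex on `X × Y`, with alternating steps
`x_{k+1} = argmin_{x ∈ X} f(x, y_k)` and `y_{k+1} = argmin_{y ∈ Y} f(x_{k+1}, y)`.
If convex sets `X_{k+1} ∋ x_{k+1}` and `Y_k ∋ y_k` exist such that for all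
`x' ∈ X_{k+1}`, `y', y'' ∈ Y_k` and some `σ ≥ 1`,
`∇²f(x', y') ⪰ (1/σ) ∇²_{yy} f(x_{k+1}, y'')`, then for any `x* ∈ X_{k+1}`,
`y* ∈ Y_k`: `f(x_{k+1}, y_k) − f(x_{k+1}, y_{k+1}) ≥ (1/σ)(f(x_{k+1}, y_k) − f(x*, y*))`. -/
theorem stmt_13 (a b : ℕ)
    (X : Set (Fin a → ℝ)) (Y : Set (Fin b → ℝ))
    (hX : Convex ℝ X) (hY : Convex ℝ Y)
    (f : (Fin a → ℝ) × (Fin b → ℝ) → ℝ)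
    (f' : (Fin a → ℝ) × (Fin b → ℝ) → ((Fin a → ℝ) × (Fin b → ℝ)) →L[ℝ] ℝ)
    (f'' : (Fin a → ℝ) × (Fin b → ℝ) →
      ((Fin a → ℝ) × (Fin b → ℝ)) →L[ℝ] ((Fin a → ℝ) × (Fin b → ℝ)) →L[ℝ] ℝ)
    (hf' : ∀ z, HasFDerivAt f (f' z) z)
    (hf'' : ∀ z, HasFDerivAt f' (f'' z) z)
    (hconv : ConvexOn ℝ (X ×ˢ Y) f)
    (σ : ℝ) (hσ : 1 ≤ σ)
    (yk : Fin b → ℝ) (hykY : yk ∈ Y)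
    (xk1 : Fin a → ℝ) (hxk1X : xk1 ∈ X)
    (hxk1min : ∀ x ∈ X, f (xk1, yk) ≤ f (x, yk))
    (yk1 : Fin b → ℝ) (hyk1Y : yk1 ∈ Y)
    (hyk1min : ∀ y ∈ Y, f (xk1, yk1) ≤ f (xk1, y))
    (Xk1 : Set (Fin a → ℝ)) (Yk : Set (Fin b → ℝ))
    (hXk1conv : Convex ℝ Xk1) (hYkconv : Convex ℝ Yk)
    (hXk1sub : Xk1 ⊆ X) (hYksub : Yk ⊆ Y)
    (hxk1mem : xk1 ∈ Xk1) (hykmem : yk ∈ Yk)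
    (hdom : ∀ x' ∈ Xk1, ∀ y' ∈ Yk, ∀ y'' ∈ Yk,
      ∀ w : (Fin a → ℝ) × (Fin b → ℝ),
        f'' (x', y') w w ≥ (1 / σ) * f'' (xk1, y'') (0, w.2) (0, w.2)) :
    ∀ xs ∈ Xk1, ∀ ys ∈ Yk,
      f (xk1, yk) - f (xk1, yk1) ≥ (1 / σ) * (f (xk1, yk) - f (xs, ys)) :=
  stmt_13_general a b X Y f f' f'' hf' hf'' σ hσ yk xk1 hxk1min yk1 hyk1min Xk1 Yk hXk1conv hYkconv
    hXk1sub hYksub hxk1mem hykmem hdom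
end

section
/- Let r(x,y) = 2M(10 Σ_j x_j log x_j + xᵀAᵀ(y²)) where A ∈ {0,1}^{2n×m} has columns of ℓ1-norm 2 and M > 0. Fix x₊ with positive entries and let X = {x : x ≥ x₊/2 entrywise} and Y = [−1,1]^{2n}. Then for any x' ∈ X and y', y'' ∈ Y, ∇²r(x', y') ⪰ (1/12)∇²_{yy} r(x₊, y''). -/
/-!
Entrywise, the Hessian form of `r` pairs the coordinates `(uⱼ, vᵢ)` through
`5uⱼ²/xⱼ + 4uⱼvᵢyᵢ + 2vᵢ²xⱼ`. Completing the square in `uⱼ` and using `yᵢ² ≤ 1` bounds this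
below by `(6/5) vᵢ² xⱼ`, and `xⱼ ≥ x₊ⱼ/2` turns that into a multiple of `vᵢ² x₊ⱼ`, the
entry of the `yy`-block at `x₊`. Summing against the nonnegative weights `Aᵢⱼ` gives the claim.
-/

/-- The coefficient of `Aᵢⱼ` in the quadratic form `(u,v)ᵀ ∇²r(x,y) (u,v) / 2M`. -/
noncomputable def hessEntry (x y u v : ℝ) : ℝ := 5 * u ^ 2 / x + 4 * u * v * y + 2 * v ^ 2 * x

lemma hessEntry_ge {x y : ℝ} (hx : 0 < x) (hy : |y| ≤ 1) (u v : ℝ) :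
    6 / 5 * v ^ 2 * x ≤ hessEntry x y u v := by
  have hy2 : y ^ 2 ≤ 1 := by rwa [sq_le_one_iff_abs_le_one]
  have hsq : x * (hessEntry x y u v - 6 / 5 * v ^ 2 * x)
      = 5 * (u + 2 / 5 * v * x * y) ^ 2 + 4 / 5 * (v * x) ^ 2 * (1 - y ^ 2) := by
    unfold hessEntry
    field_simp
    ring
  have hnonneg : 0 ≤ x * (hessEntry x y u v - 6 / 5 * v ^ 2 * x) := by
    rw [hsq]
    have : 0 ≤ 1 - y ^ 2 := by linarith
    positivity
  exact sub_nonneg.mp (nonneg_of_mul_nonneg_right hnonneg hx)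

lemma sq_mul_le_six_mul_hessEntry {a xp x y : ℝ} (ha : 0 ≤ a) (hxp : 0 < xp)
    (hx : xp / 2 ≤ x) (hy : |y| ≤ 1) (u v : ℝ) :
    v ^ 2 * (a * xp) ≤ 6 * (a * hessEntry x y u v) := by
  have hbound := hessEntry_ge (x := x) (by linarith) hy u v
  have hxp_le : v ^ 2 * xp ≤ 6 * hessEntry x y u v := by
    nlinarith [sq_nonneg v, mul_le_mul_of_nonneg_left hx (sq_nonneg v)]
  linarith [mul_le_mul_of_nonneg_left hxp_le ha]

theorem stmt_14_general (n m : ℕ)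
    (A : Fin (2 * n) → Fin m → ℝ)
    (hA01 : ∀ i j, A i j = 0 ∨ A i j = 1)
    (M : ℝ) (hM : 0 < M)
    (xp : Fin m → ℝ) (hxp : ∀ j, 0 < xp j)
    (x' : Fin m → ℝ) (hx' : ∀ j, xp j / 2 ≤ x' j)
    (y' : Fin (2 * n) → ℝ) (hy' : ∀ i, |y' i| ≤ 1) :
    ∀ (u : Fin m → ℝ) (v : Fin (2 * n) → ℝ),
      2 * M * ∑ i, ∑ j, A i j *
          (5 * (u j) ^ 2 / x' j + 4 * u j * v i * y' i + 2 * (v i) ^ 2 * x' j)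
        ≥ (1 / 12) * (4 * M * ∑ i, (v i) ^ 2 * ∑ j, A i j * xp j) := by
  intro u v
  have hA : ∀ i j, 0 ≤ A i j := fun i j => by rcases hA01 i j with h | h <;> simp [h]
  have hsum : ∑ i, ∑ j, v i ^ 2 * (A i j * xp j)
      ≤ ∑ i, ∑ j, 6 * (A i j * hessEntry (x' j) (y' i) (u j) (v i)) :=
    Finset.sum_le_sum fun i _ => Finset.sum_le_sum fun j _ =>
      sq_mul_le_six_mul_hessEntry (hA i j) (hxp j) (hx' j) (hy' i) (u j) (v i)
  simp only [← Finset.mul_sum, hessEntry] at hsum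
  linarith [mul_le_mul_of_nonneg_left hsum hM.le]

/-- Hessian domination for Sherman's regularizer
`r(x,y) = 2M(10 Σⱼ xⱼ log xⱼ + xᵀAᵀ(y²))`: for `x₊` entrywise positive,
`X = {x : x ≥ x₊/2}` and `Y = [−1,1]^{2n}`, for any `x' ∈ X` and `y', y'' ∈ Y`,
`∇²r(x', y') ⪰ (1/12) ∇²_{yy} r(x₊, y'')`, stated via the explicit quadratic forms
`(u,v)ᵀ ∇²r(x,y) (u,v) = 2M Σ_{ij} A_{ij}(5uⱼ²/xⱼ + 4uⱼvᵢyᵢ + 2vᵢ²xⱼ)` and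
`(u,v)ᵀ ∇²_{yy} r(x₊, y'') (u,v) = 4M Σᵢ vᵢ² (Ax₊)ᵢ`. -/
theorem stmt_14 (n m : ℕ)
    (A : Fin (2 * n) → Fin m → ℝ)
    (hA01 : ∀ i j, A i j = 0 ∨ A i j = 1)
    (hAcol : ∀ j, ∑ i, A i j = 2)
    (M : ℝ) (hM : 0 < M)
    (xp : Fin m → ℝ) (hxp : ∀ j, 0 < xp j)
    (x' : Fin m → ℝ) (hx' : ∀ j, xp j / 2 ≤ x' j)
    (y' y'' : Fin (2 * n) → ℝ) (hy' : ∀ i, |y' i| ≤ 1) (hy'' : ∀ i, |y'' i| ≤ 1) :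
    ∀ (u : Fin m → ℝ) (v : Fin (2 * n) → ℝ),
      2 * M * ∑ i, ∑ j, A i j *
          (5 * (u j) ^ 2 / x' j + 4 * u j * v i * y' i + 2 * (v i) ^ 2 * x' j)
        ≥ (1 / 12) * (4 * M * ∑ i, (v i) ^ 2 * ∑ j, A i j * xp j) :=
  stmt_14_general n m A hA01 M hM xp hxp x' hx' y' hy'
end

section
/- For r as in Sherman's regularizer and any y ∈ [−1,1]^{2n} and x with positive entries, the diagonal matrix D(x) with x-block 2M‖A_{:j}‖₁ diag(1/x_j) and y-block 2M diag((Ax)_i) satisfies D(x) ⪯ ∇²r(x,y) ⪯ 6 D(x). -/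
/-! Both quadratic forms are sums over the entries `A i j ≥ 0` of a `2 × 2` form in `(u j, v i)`,
so it suffices to compare them entrywise. With `y² ≤ 1`, each comparison is a sum of squares over
`x > 0`:
`4u² + 4uvyx + v²x² = (2u + vxy)² + (vx)²(1 - y²)` and
`u² - 4uvyx + 4v²x² = (u - 2vxy)² + 4(vx)²(1 - y²)`. -/

lemma diag_form_le_hessian_form {x y : ℝ} (u v : ℝ) (hx : 0 < x) (hy : |y| ≤ 1) :
    u ^ 2 / x + v ^ 2 * x ≤ 5 * u ^ 2 / x + 4 * u * v * y + 2 * v ^ 2 * x := by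
  have hy2 : 0 ≤ 1 - y ^ 2 := sub_nonneg.2 ((sq_le_one_iff_abs_le_one y).2 hy)
  have hgap : 5 * u ^ 2 / x + 4 * u * v * y + 2 * v ^ 2 * x - (u ^ 2 / x + v ^ 2 * x)
      = ((2 * u + v * x * y) ^ 2 + (v * x) ^ 2 * (1 - y ^ 2)) / x := by
    field_simp
    ring
  have : 0 ≤ ((2 * u + v * x * y) ^ 2 + (v * x) ^ 2 * (1 - y ^ 2)) / x := by positivity
  linarith

lemma hessian_form_le_six_diag_form {x y : ℝ} (u v : ℝ) (hx : 0 < x) (hy : |y| ≤ 1) :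
    5 * u ^ 2 / x + 4 * u * v * y + 2 * v ^ 2 * x ≤ 6 * (u ^ 2 / x + v ^ 2 * x) := by
  have hy2 : 0 ≤ 1 - y ^ 2 := sub_nonneg.2 ((sq_le_one_iff_abs_le_one y).2 hy)
  have hgap : 6 * (u ^ 2 / x + v ^ 2 * x) - (5 * u ^ 2 / x + 4 * u * v * y + 2 * v ^ 2 * x)
      = ((u - 2 * v * x * y) ^ 2 + 4 * (v * x) ^ 2 * (1 - y ^ 2)) / x := by
    field_simp
    ring
  have : 0 ≤ ((u - 2 * v * x * y) ^ 2 + 4 * (v * x) ^ 2 * (1 - y ^ 2)) / x := by positivity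
  linarith

theorem stmt_15_general (n m : ℕ)
    (A : Fin (2 * n) → Fin m → ℝ)
    (hA01 : ∀ i j, A i j = 0 ∨ A i j = 1)
    (M : ℝ) (hM : 0 < M)
    (x : Fin m → ℝ) (hx : ∀ j, 0 < x j)
    (y : Fin (2 * n) → ℝ) (hy : ∀ i, |y i| ≤ 1) :
    ∀ (u : Fin m → ℝ) (v : Fin (2 * n) → ℝ),
      (2 * M * ∑ i, ∑ j, A i j * ((u j) ^ 2 / x j + (v i) ^ 2 * x j)
        ≤ 2 * M * ∑ i, ∑ j, A i j *
            (5 * (u j) ^ 2 / x j + 4 * u j * v i * y i + 2 * (v i) ^ 2 * x j)) ∧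
      (2 * M * ∑ i, ∑ j, A i j *
            (5 * (u j) ^ 2 / x j + 4 * u j * v i * y i + 2 * (v i) ^ 2 * x j)
        ≤ 6 * (2 * M * ∑ i, ∑ j, A i j * ((u j) ^ 2 / x j + (v i) ^ 2 * x j))) := by
  intro u v
  have hA : ∀ i j, 0 ≤ A i j := fun i j => by rcases hA01 i j with h | h <;> simp [h]
  refine ⟨?_, ?_⟩
  · gcongr 2 * M * ∑ i, ∑ j, A i j * ?_ with i _ j _
    · exact hA i j
    · exact diag_form_le_hessian_form _ _ (hx j) (hy i)
  · calc _ ≤ 2 * M * ∑ i, ∑ j, A i j * (6 * ((u j) ^ 2 / x j + (v i) ^ 2 * x j)) := by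
          gcongr 2 * M * ∑ i, ∑ j, A i j * ?_ with i _ j _
          · exact hA i j
          · exact hessian_form_le_six_diag_form _ _ (hx j) (hy i)
      _ = _ := by simp only [mul_left_comm _ (6 : ℝ), ← Finset.mul_sum]

/-- Diagonal approximation of the Hessian of Sherman's regularizer
`r(x,y) = 2M(10 Σⱼ xⱼ log xⱼ + xᵀAᵀ(y²))`: for `x` entrywise positive and
`y ∈ [−1,1]^{2n}`, the diagonal matrix `D(x)` with `x`-block
`2M‖A_{:j}‖₁ diag(1/xⱼ)` and `y`-block `2M diag((Ax)ᵢ)` satisfies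
`D(x) ⪯ ∇²r(x,y) ⪯ 6 D(x)`, stated via quadratic forms:
`2M Σ_{ij} A_{ij}(uⱼ²/xⱼ + vᵢ²xⱼ) ≤ 2M Σ_{ij} A_{ij}(5uⱼ²/xⱼ + 4uⱼvᵢyᵢ + 2vᵢ²xⱼ)
  ≤ 6 · 2M Σ_{ij} A_{ij}(uⱼ²/xⱼ + vᵢ²xⱼ)`. -/
theorem stmt_15 (n m : ℕ)
    (A : Fin (2 * n) → Fin m → ℝ)
    (hA01 : ∀ i j, A i j = 0 ∨ A i j = 1)
    (hAcol : ∀ j, ∑ i, A i j = 2)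
    (M : ℝ) (hM : 0 < M)
    (x : Fin m → ℝ) (hx : ∀ j, 0 < x j)
    (y : Fin (2 * n) → ℝ) (hy : ∀ i, |y i| ≤ 1) :
    ∀ (u : Fin m → ℝ) (v : Fin (2 * n) → ℝ),
      (2 * M * ∑ i, ∑ j, A i j * ((u j) ^ 2 / x j + (v i) ^ 2 * x j)
        ≤ 2 * M * ∑ i, ∑ j, A i j *
            (5 * (u j) ^ 2 / x j + 4 * u j * v i * y i + 2 * (v i) ^ 2 * x j)) ∧
      (2 * M * ∑ i, ∑ j, A i j *
            (5 * (u j) ^ 2 / x j + 4 * u j * v i * y i + 2 * (v i) ^ 2 * x j)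
        ≤ 6 * (2 * M * ∑ i, ∑ j, A i j * ((u j) ^ 2 / x j + (v i) ^ 2 * x j))) :=
  stmt_15_general n m A hA01 M hM x hx y hy
end

section
/- In the alternating minimization scheme for f(x,y) = ⟨ξ,x⟩ + ⟨η,y⟩ + r(x,y) over Δᵐ × [−1,1]^{2n}, where r is Sherman's regularizer, the function error f(x_k, y_k) − f(x_opt, y_opt) decreases by a factor of at least 1/24 per full iteration: (23/24)(f(x_{k+1}, y_k) − f(x_opt, y_opt)) ≥ f(x_{k+2}, y_{k+1}) − f(x_opt, y_opt). -/
/-!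
Put `x* = (x_{k+1} + x_opt)/2`, `y* = (y_k + y_opt)/2` and let `D = ∑ⱼ (x_{k+1,j} - x_{opt,j})² /
(x_{k+1,j} + x_{opt,j})` be the triangular discrimination of `x_{k+1}` and `x_opt`.

The entropy `∑ x log x` beats its midpoint by at least `D/4`, while the coupling
`∑ᵢⱼ Aᵢⱼ xⱼ yᵢ²`, which is not jointly convex, exceeds its average at the midpoint by at most `D`
(each column of `A` sums to `2`). With the weights `20M` and `2M` of Sherman's regularizer this
gives `f(x*, y*) ≤ (f(x_{k+1}, y_k) + f(x_opt, y_opt))/2 - 3MD`.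

On the other hand `y_{k+1}` satisfies the first-order optimality condition for `f(x_{k+1}, ·)`
on the box; moving `x_{k+1}` to `x*` perturbs it by a term that AM-GM bounds by `D` again, so
`f(x*, y_{k+1}) ≤ f(x*, y*) + 2MD`. Since `f(x_{k+2}, y_{k+1}) ≤ f(x*, y_{k+1})`, the error
contracts by a factor `1/2` per iteration.
-/

open Real Finset

lemma two_mul_le_log_one_add_sub_log_one_sub {s : ℝ} (hs0 : 0 ≤ s) (hs1 : s < 1) :
    2 * s ≤ log (1 + s) - log (1 - s) := by
  have hs : 0 < 1 - s := by linarith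
  have h := le_log_one_add_of_nonneg (x := 2 * s / (1 - s)) (by positivity)
  have e1 : 2 * (2 * s / (1 - s)) / (2 * s / (1 - s) + 2) = 2 * s := by
    field_simp; ring
  have e2 : 1 + 2 * s / (1 - s) = (1 + s) / (1 - s) := by
    field_simp; ring
  rwa [e1, e2, log_div (by linarith) hs.ne'] at h

lemma sq_le_mul_log_one_add_add_mul_log_one_sub {s : ℝ} (hs : |s| ≤ 1) :
    s ^ 2 ≤ (1 + s) * log (1 + s) + (1 - s) * log (1 - s) := by
  wlog hs0 : 0 ≤ s generalizing s
  · have := this (s := -s) (by rwa [abs_neg]) (by linarith)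
    rw [neg_sq, ← sub_eq_add_neg, sub_neg_eq_add] at this
    linarith
  set g : ℝ → ℝ := fun s => (1 + s) * log (1 + s) + (1 - s) * log (1 - s) - s ^ 2
  have hmono : MonotoneOn g (Set.Icc 0 1) := by
    refine monotoneOn_of_hasDerivWithinAt_nonneg (convex_Icc 0 1)
      (f' := fun s => log (1 + s) - log (1 - s) - 2 * s) ?_ (fun s hs => ?_) (fun s hs => ?_)
    · exact ((continuous_mul_log.comp (by fun_prop)).add
        (continuous_mul_log.comp (by fun_prop)) |>.sub (by fun_prop)).continuousOn
    · rw [interior_Icc] at hs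
      obtain ⟨h0, h1⟩ := hs
      have d1 := (hasDerivAt_mul_log (x := 1 + s) (by linarith)).comp_const_add 1 s
      have d2 := (hasDerivAt_mul_log (x := 1 - s) (by linarith)).comp_const_sub 1 s
      exact (((d1.add d2).sub (hasDerivAt_pow 2 s)).congr_deriv
        (by push_cast; ring)).hasDerivWithinAt
    · rw [interior_Icc] at hs
      linarith [two_mul_le_log_one_add_sub_log_one_sub hs.1.le hs.2]
  simpa [g] using hmono ⟨le_refl 0, zero_le_one⟩ ⟨hs0, (abs_le.1 hs).2⟩ hs0

lemma mul_log_midpoint_add_le {p q : ℝ} (hp : 0 ≤ p) (hq : 0 ≤ q) :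
    (p + q) / 2 * log ((p + q) / 2) + (p - q) ^ 2 / (p + q) / 4 ≤
      (p * log p + q * log q) / 2 := by
  rcases (add_nonneg hp hq).eq_or_lt with hpq | hpq
  · obtain ⟨rfl, rfl⟩ : p = 0 ∧ q = 0 := ⟨by linarith, by linarith⟩
    simp
  set m := (p + q) / 2
  set s := (p - q) / (p + q)
  have hs : |s| ≤ 1 := by
    rw [abs_div, abs_of_pos hpq, div_le_one hpq, abs_le]
    constructor <;> linarith
  have hp' : p = m * (1 + s) := by simp only [m, s]; field_simp; ring
  have hq' : q = m * (1 - s) := by simp only [m, s]; field_simp; ring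
  have hgap : (p - q) ^ 2 / (p + q) / 4 = m / 2 * s ^ 2 := by
    simp only [m, s]; field_simp; ring
  have hmul : ∀ a b : ℝ, a * b * log (a * b) = b * (a * log a) + a * (b * log b) := fun a b => by
    have := negMulLog_mul a b
    simp only [negMulLog, neg_mul] at this
    linarith
  rw [hgap, hp', hq', hmul, hmul]
  have hm : 0 ≤ m / 2 := by positivity
  linarith [mul_le_mul_of_nonneg_left (sq_le_mul_log_one_add_add_mul_log_one_sub hs) hm]

lemma abs_add_div_two_le {u v c : ℝ} (hu : |u| ≤ c) (hv : |v| ≤ c) : |(u + v) / 2| ≤ c := by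
  rw [abs_le] at *
  constructor <;> linarith

lemma sq_sub_div_add_quadratic_nonneg {p q w a : ℝ} (hp : 0 ≤ p) (hq : 0 ≤ q) (hw : |w| ≤ 1) :
    0 ≤ (p + q) * a ^ 2 + 2 * (p - q) * w * a + (p - q) ^ 2 / (p + q) := by
  rcases (add_nonneg hp hq).eq_or_lt with hpq | hpq
  · obtain ⟨rfl, rfl⟩ : p = 0 ∧ q = 0 := ⟨by linarith, by linarith⟩
    simp
  have : (p + q) * a ^ 2 + 2 * (p - q) * w * a + (p - q) ^ 2 / (p + q) =
      (((p + q) * a + (p - q) * w) ^ 2 + (p - q) ^ 2 * (1 - w ^ 2)) / (p + q) := by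
    field_simp; ring
  rw [this]
  have : 0 ≤ 1 - w ^ 2 := sub_nonneg.2 ((sq_le_one_iff_abs_le_one w).2 hw)
  positivity

lemma midpoint_mul_sq_le {p q u v : ℝ} (hp : 0 ≤ p) (hq : 0 ≤ q) (hu : |u| ≤ 1) (hv : |v| ≤ 1) :
    (p + q) / 2 * ((u + v) / 2) ^ 2 ≤ (p * u ^ 2 + q * v ^ 2) / 2 + (p - q) ^ 2 / (p + q) / 2 := by
  have := sq_sub_div_add_quadratic_nonneg (a := (u - v) / 2) hp hq (abs_add_div_two_le hu hv)
  linarith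

theorem IsMinOn.deriv_mul_sub_nonneg {φ : ℝ → ℝ} {φ' u v : ℝ} {I : Set ℝ} (hI : Convex ℝ I)
    (hmin : IsMinOn φ I u) (hu : u ∈ I) (hv : v ∈ I) (hφ : HasDerivAt φ φ' u) :
    0 ≤ φ' * (v - u) := by
  have := hmin.localize.hasFDerivWithinAt_nonneg hφ.hasFDerivAt.hasFDerivWithinAt
    (sub_mem_posTangentConeAt_of_segment_subset (hI.segment_subset hu hv))
  simpa [mul_comm] using this

theorem isMinOn_apply_of_sum_le {κ : Type*} [Fintype κ] [DecidableEq κ] {I : Set ℝ}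
    (φ : κ → ℝ → ℝ) {y : κ → ℝ} (hy : ∀ i, y i ∈ I)
    (hmin : ∀ z : κ → ℝ, (∀ i, z i ∈ I) → ∑ i, φ i (y i) ≤ ∑ i, φ i (z i)) (i : κ) :
    IsMinOn (φ i) I (y i) := by
  intro t ht
  have h := hmin (Function.update y i t) fun k => by
    rcases eq_or_ne k i with rfl | hk
    · simpa using ht
    · simpa [hk] using hy k
  simp only [Function.apply_update (fun k => φ k) y i t] at h
  rw [sum_update_of_mem (mem_univ i), sum_eq_add_sum_sdiff_singleton_of_mem (mem_univ i)] at h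
  exact le_of_add_le_add_right h

section Sums

variable {ι κ : Type*} [Fintype ι] [Fintype κ]

theorem sum_mul_add_div_two (c a b : ι → ℝ) :
    ∑ j, c j * ((a j + b j) / 2) = ((∑ j, c j * a j) + ∑ j, c j * b j) / 2 := by
  rw [← sum_add_distrib, sum_div]
  exact sum_congr rfl fun j _ => by ring

theorem sum_sum_mul_le_mul_sum {A h : κ → ι → ℝ} {g : ι → ℝ} {c : ℝ} (hA : ∀ i j, 0 ≤ A i j)
    (hcol : ∀ j, ∑ i, A i j ≤ c) (hg : ∀ j, 0 ≤ g j) (hh : ∀ i j, h i j ≤ g j) :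
    ∑ i, ∑ j, A i j * h i j ≤ c * ∑ j, g j :=
  calc ∑ i, ∑ j, A i j * h i j
      ≤ ∑ i, ∑ j, A i j * g j := by gcongr with i _ j _; exacts [hA i j, hh i j]
    _ = ∑ j, (∑ i, A i j) * g j := by rw [sum_comm]; simp only [sum_mul]
    _ ≤ ∑ j, c * g j := by gcongr with j _; exacts [hg j, hcol j]
    _ = c * ∑ j, g j := (mul_sum ..).symm

theorem add_div_two_mem_stdSimplex {x x' : ι → ℝ} (hx : x ∈ stdSimplex ℝ ι)
    (hx' : x' ∈ stdSimplex ℝ ι) : (x + x') / 2 ∈ stdSimplex ℝ ι := by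
  convert convex_stdSimplex ℝ ι hx hx' (by norm_num : (0 : ℝ) ≤ 1 / 2)
    (by norm_num : (0 : ℝ) ≤ 1 / 2) (by norm_num) using 1
  ext j
  simp only [Pi.div_apply, Pi.add_apply, Pi.ofNat_apply, Pi.smul_apply, smul_eq_mul]
  ring

end Sums

noncomputable section Sherman

variable {ι κ : Type*} [Fintype ι] [Fintype κ]

def shermanObjective (ξ : ι → ℝ) (η : κ → ℝ) (A : κ → ι → ℝ) (M : ℝ) (x : ι → ℝ)
    (y : κ → ℝ) : ℝ :=
  (∑ j, ξ j * x j) + (∑ i, η i * y i) +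
    2 * M * (10 * ∑ j, x j * log (x j) + ∑ i, ∑ j, A i j * x j * y i ^ 2)

def triangularDiscrimination (x x' : ι → ℝ) : ℝ := ∑ j, (x j - x' j) ^ 2 / (x j + x' j)

lemma triangularDiscrimination_nonneg {x x' : ι → ℝ} (hx : ∀ j, 0 ≤ x j)
    (hx' : ∀ j, 0 ≤ x' j) : 0 ≤ triangularDiscrimination x x' :=
  sum_nonneg fun j _ => div_nonneg (sq_nonneg _) (add_nonneg (hx j) (hx' j))

theorem sum_mul_log_midpoint_le {x x' : ι → ℝ} (hx : ∀ j, 0 ≤ x j) (hx' : ∀ j, 0 ≤ x' j) :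
    ∑ j, (x j + x' j) / 2 * log ((x j + x' j) / 2) ≤
      ((∑ j, x j * log (x j)) + ∑ j, x' j * log (x' j)) / 2 -
        triangularDiscrimination x x' / 4 := by
  rw [triangularDiscrimination, sum_div, ← sum_add_distrib, sum_div, ← sum_sub_distrib]
  exact sum_le_sum fun j _ => by linarith [mul_log_midpoint_add_le (hx j) (hx' j)]

variable {ξ : ι → ℝ} {η : κ → ℝ} {A : κ → ι → ℝ} {M : ℝ}

theorem sum_sum_mul_midpoint_mul_sq_le (hA : ∀ i j, 0 ≤ A i j) (hcol : ∀ j, ∑ i, A i j ≤ 2)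
    {x x' : ι → ℝ} {y y' : κ → ℝ} (hx : ∀ j, 0 ≤ x j) (hx' : ∀ j, 0 ≤ x' j)
    (hy : ∀ i, |y i| ≤ 1) (hy' : ∀ i, |y' i| ≤ 1) :
    ∑ i, ∑ j, A i j * ((x j + x' j) / 2) * ((y i + y' i) / 2) ^ 2 ≤
      ((∑ i, ∑ j, A i j * x j * y i ^ 2) + ∑ i, ∑ j, A i j * x' j * y' i ^ 2) / 2 +
        triangularDiscrimination x x' := by
  set h : κ → ι → ℝ := fun i j =>
    (x j + x' j) / 2 * ((y i + y' i) / 2) ^ 2 - (x j * y i ^ 2 + x' j * y' i ^ 2) / 2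
  have key := sum_sum_mul_le_mul_sum (h := h)
    (g := fun j => (x j - x' j) ^ 2 / (x j + x' j) / 2) hA hcol
    (fun j => by have := add_nonneg (hx j) (hx' j); positivity)
    (fun i j => by simp only [h]; linarith [midpoint_mul_sq_le (hx j) (hx' j) (hy i) (hy' i)])
  rw [← sum_div] at key
  have e : ∀ i j, A i j * ((x j + x' j) / 2) * ((y i + y' i) / 2) ^ 2 =
      (A i j * x j * y i ^ 2 + A i j * x' j * y' i ^ 2) / 2 + A i j * h i j :=
    fun i j => by ring
  simp only [e, sum_add_distrib, ← sum_div, triangularDiscrimination]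
  linarith

theorem shermanObjective_midpoint_le (hA : ∀ i j, 0 ≤ A i j) (hcol : ∀ j, ∑ i, A i j ≤ 2)
    (hM : 0 ≤ M) {x x' : ι → ℝ} {y y' : κ → ℝ} (hx : ∀ j, 0 ≤ x j) (hx' : ∀ j, 0 ≤ x' j)
    (hy : ∀ i, |y i| ≤ 1) (hy' : ∀ i, |y' i| ≤ 1) :
    shermanObjective ξ η A M ((x + x') / 2) ((y + y') / 2) ≤
      (shermanObjective ξ η A M x y + shermanObjective ξ η A M x' y') / 2 -
        3 * M * triangularDiscrimination x x' := by
  have hent := mul_le_mul_of_nonneg_left (sum_mul_log_midpoint_le hx hx') hM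
  have hcpl := mul_le_mul_of_nonneg_left (sum_sum_mul_midpoint_mul_sq_le hA hcol hx hx' hy hy') hM
  simp only [shermanObjective, Pi.div_apply, Pi.add_apply, Pi.ofNat_apply, sum_mul_add_div_two]
  linarith

theorem shermanObjective_eq_add_sum (x : ι → ℝ) (y : κ → ℝ) :
    shermanObjective ξ η A M x y = (∑ j, ξ j * x j) + 20 * M * ∑ j, x j * log (x j) +
      ∑ i, (η i * y i + 2 * M * (∑ j, A i j * x j) * y i ^ 2) := by
  have e : ∑ i, 2 * M * (∑ j, A i j * x j) * y i ^ 2 =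
      2 * M * ∑ i, ∑ j, A i j * x j * y i ^ 2 := by
    simp only [mul_sum, sum_mul, mul_assoc]
  rw [shermanObjective, sum_add_distrib, e]
  ring

theorem shermanObjective_midpoint_le_of_minimizer (hA : ∀ i j, 0 ≤ A i j)
    (hcol : ∀ j, ∑ i, A i j ≤ 2) (hM : 0 ≤ M) {x x' : ι → ℝ} {y v : κ → ℝ}
    (hx : ∀ j, 0 ≤ x j) (hx' : ∀ j, 0 ≤ x' j) (hy : ∀ i, |y i| ≤ 1)
    (hmin : ∀ z : κ → ℝ, (∀ i, |z i| ≤ 1) →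
      shermanObjective ξ η A M x y ≤ shermanObjective ξ η A M x z)
    (hv : ∀ i, |v i| ≤ 1) :
    shermanObjective ξ η A M ((x + x') / 2) y ≤
      shermanObjective ξ η A M ((x + x') / 2) v + 2 * M * triangularDiscrimination x x' := by
  classical
  set φ : κ → ℝ → ℝ := fun i t => η i * t + 2 * M * (∑ j, A i j * x j) * t ^ 2
  have hcoord : ∀ i, IsMinOn (φ i) (Set.Icc (-1) 1) (y i) :=
    isMinOn_apply_of_sum_le φ (fun i => abs_le.1 (hy i)) fun z hz => by
      have := hmin z fun i => abs_le.2 (hz i)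
      rw [shermanObjective_eq_add_sum, shermanObjective_eq_add_sum] at this
      linarith
  have hfirst : ∀ i, 0 ≤ (η i + 4 * M * (∑ j, A i j * x j) * y i) * (v i - y i) := fun i =>
    (hcoord i).deriv_mul_sub_nonneg (convex_Icc _ _) (abs_le.1 (hy i)) (abs_le.1 (hv i))
      ((((hasDerivAt_id' (y i)).const_mul (η i)).add
        ((hasDerivAt_pow 2 (y i)).const_mul (2 * M * ∑ j, A i j * x j))).congr_deriv
          (by push_cast; ring))
  -- what the first-order condition at `x` leaves of the increment at the midpoint, per column
  set h : κ → ι → ℝ := fun i j =>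
    M * -(2 * (x' j - x j) * y i * (v i - y i) + (x j + x' j) * (v i - y i) ^ 2)
  have hrow : ∀ i, η i * y i + 2 * M * (∑ j, A i j * ((x j + x' j) / 2)) * y i ^ 2 -
      (η i * v i + 2 * M * (∑ j, A i j * ((x j + x' j) / 2)) * v i ^ 2) ≤
        ∑ j, A i j * h i j := by
    intro i
    have e : ∑ j, A i j * h i j =
        (∑ j, A i j * x j) * (M * (2 * y i * (v i - y i) - (v i - y i) ^ 2)) +
          (∑ j, A i j * x' j) * (M * (-2 * y i * (v i - y i) - (v i - y i) ^ 2)) := by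
      rw [sum_mul, sum_mul, ← sum_add_distrib]
      exact sum_congr rfl fun j _ => by simp only [h]; ring
    rw [e, sum_mul_add_div_two]
    linear_combination hfirst i
  have hT : ∀ i j, h i j ≤ M * ((x j - x' j) ^ 2 / (x j + x' j)) := fun i j => by
    have := sq_sub_div_add_quadratic_nonneg (w := -y i) (a := v i - y i) (hx j) (hx' j)
      (by rw [abs_neg]; exact hy i)
    simp only [h]
    exact mul_le_mul_of_nonneg_left (by linarith) hM
  have hcols := sum_sum_mul_le_mul_sum hA hcol
    (fun j => mul_nonneg hM (div_nonneg (sq_nonneg _) (add_nonneg (hx j) (hx' j)))) hT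
  have hrows := sum_le_sum fun i (_ : i ∈ univ) => hrow i
  rw [← mul_sum] at hcols
  rw [sum_sub_distrib] at hrows
  rw [shermanObjective_eq_add_sum, shermanObjective_eq_add_sum, triangularDiscrimination]
  simp only [Pi.div_apply, Pi.add_apply, Pi.ofNat_apply]
  linarith

end Sherman

theorem stmt_16_general (n m : ℕ)
    (A : Fin (2 * n) → Fin m → ℝ)
    (hA01 : ∀ i j, A i j = 0 ∨ A i j = 1)
    (hAcol : ∀ j, ∑ i, A i j = 2)
    (M : ℝ) (hM : 0 < M)
    (ξ : Fin m → ℝ) (η : Fin (2 * n) → ℝ)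
    (r : (Fin m → ℝ) → (Fin (2 * n) → ℝ) → ℝ)
    (hr : ∀ x y, r x y =
      2 * M * (10 * ∑ j, x j * Real.log (x j) + ∑ i, ∑ j, A i j * x j * (y i) ^ 2))
    (f : (Fin m → ℝ) → (Fin (2 * n) → ℝ) → ℝ)
    (hf : ∀ x y, f x y = (∑ j, ξ j * x j) + (∑ i, η i * y i) + r x y)
    (yk : Fin (2 * n) → ℝ) (hyk : ∀ i, |yk i| ≤ 1)
    (xk1 : Fin m → ℝ) (hxk1 : (∀ j, 0 ≤ xk1 j) ∧ (∑ j, xk1 j) = 1)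
    (yk1 : Fin (2 * n) → ℝ) (hyk1 : ∀ i, |yk1 i| ≤ 1)
    (hyk1min : ∀ y : Fin (2 * n) → ℝ, (∀ i, |y i| ≤ 1) → f xk1 yk1 ≤ f xk1 y)
    (xk2 : Fin m → ℝ)
    (hxk2min : ∀ x : Fin m → ℝ, (∀ j, 0 ≤ x j) → (∑ j, x j) = 1 → f xk2 yk1 ≤ f x yk1)
    (xo : Fin m → ℝ) (yo : Fin (2 * n) → ℝ)
    (hxo : (∀ j, 0 ≤ xo j) ∧ (∑ j, xo j) = 1) (hyo : ∀ i, |yo i| ≤ 1)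
    (hopt : ∀ (x : Fin m → ℝ) (y : Fin (2 * n) → ℝ),
      (∀ j, 0 ≤ x j) → (∑ j, x j) = 1 → (∀ i, |y i| ≤ 1) → f xo yo ≤ f x y) :
    (23 / 24 : ℝ) * (f xk1 yk - f xo yo) ≥ f xk2 yk1 - f xo yo := by
  obtain rfl : f = shermanObjective ξ η A M := by
    funext x y
    rw [hf, hr]
    rfl
  have hA : ∀ i j, 0 ≤ A i j := fun i j => by rcases hA01 i j with h | h <;> simp [h]
  have hcol : ∀ j, ∑ i, A i j ≤ 2 := fun j => (hAcol j).le
  have hxh : (xk1 + xo) / 2 ∈ stdSimplex ℝ (Fin m) := add_div_two_mem_stdSimplex hxk1 hxo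
  have hyh : ∀ i, |((yk + yo) / 2) i| ≤ 1 := fun i => abs_add_div_two_le (hyk i) (hyo i)
  have hxstep := hxk2min _ hxh.1 hxh.2
  have hystep :=
    shermanObjective_midpoint_le_of_minimizer hA hcol hM.le hxk1.1 hxo.1 hyk1 hyk1min hyh
  have hmid := shermanObjective_midpoint_le (ξ := ξ) (η := η) hA hcol hM.le hxk1.1 hxo.1 hyk hyo
  have hgap := hopt xk1 yk hxk1.1 hxk1.2 hyk
  have hD := mul_nonneg hM.le (triangularDiscrimination_nonneg hxk1.1 hxo.1)
  linarith

/-- Linear convergence of alternating minimization for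
`f(x,y) = ⟨ξ,x⟩ + ⟨η,y⟩ + r(x,y)` over `Δᵐ × [−1,1]^{2n}`, where `r` is Sherman's
regularizer: the function error decreases by a factor of at least `1/24` per full
iteration, i.e. `(23/24)(f(x_{k+1}, y_k) − f(x_opt, y_opt)) ≥ f(x_{k+2}, y_{k+1}) − f(x_opt, y_opt)`. -/
theorem stmt_16 (n m : ℕ)
    (A : Fin (2 * n) → Fin m → ℝ)
    (hA01 : ∀ i j, A i j = 0 ∨ A i j = 1)
    (hAcol : ∀ j, ∑ i, A i j = 2)
    (M : ℝ) (hM : 0 < M)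
    (ξ : Fin m → ℝ) (η : Fin (2 * n) → ℝ)
    (r : (Fin m → ℝ) → (Fin (2 * n) → ℝ) → ℝ)
    (hr : ∀ x y, r x y =
      2 * M * (10 * ∑ j, x j * Real.log (x j) + ∑ i, ∑ j, A i j * x j * (y i) ^ 2))
    (f : (Fin m → ℝ) → (Fin (2 * n) → ℝ) → ℝ)
    (hf : ∀ x y, f x y = (∑ j, ξ j * x j) + (∑ i, η i * y i) + r x y)
    (yk : Fin (2 * n) → ℝ) (hyk : ∀ i, |yk i| ≤ 1)
    (xk1 : Fin m → ℝ) (hxk1 : (∀ j, 0 ≤ xk1 j) ∧ (∑ j, xk1 j) = 1)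
    (hxk1min : ∀ x : Fin m → ℝ, (∀ j, 0 ≤ x j) → (∑ j, x j) = 1 → f xk1 yk ≤ f x yk)
    (yk1 : Fin (2 * n) → ℝ) (hyk1 : ∀ i, |yk1 i| ≤ 1)
    (hyk1min : ∀ y : Fin (2 * n) → ℝ, (∀ i, |y i| ≤ 1) → f xk1 yk1 ≤ f xk1 y)
    (xk2 : Fin m → ℝ) (hxk2 : (∀ j, 0 ≤ xk2 j) ∧ (∑ j, xk2 j) = 1)
    (hxk2min : ∀ x : Fin m → ℝ, (∀ j, 0 ≤ x j) → (∑ j, x j) = 1 → f xk2 yk1 ≤ f x yk1)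
    (xo : Fin m → ℝ) (yo : Fin (2 * n) → ℝ)
    (hxo : (∀ j, 0 ≤ xo j) ∧ (∑ j, xo j) = 1) (hyo : ∀ i, |yo i| ≤ 1)
    (hopt : ∀ (x : Fin m → ℝ) (y : Fin (2 * n) → ℝ),
      (∀ j, 0 ≤ x j) → (∑ j, x j) = 1 → (∀ i, |y i| ≤ 1) → f xo yo ≤ f x y) :
    (23 / 24 : ℝ) * (f xk1 yk - f xo yo) ≥ f xk2 yk1 - f xo yo :=
  stmt_16_general n m A hA01 hAcol M hM ξ η r hr f hf yk hyk xk1 hxk1 yk1 hyk1 hyk1min xk2 hxk2min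
    xo yo hxo hyo hopt
end
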